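/- arXiv:2004.10269 — 7 statements merged into one kernel-verified Lean document; each statement's English description precedes it below -/
import Mathlib

section
/- Let k, m ≥ 1 and t ∈ Z_{2^k}. Then N*_m(t, 2^k) = 1 if k = 1 and t ≡ m (mod 2); N*_m(t, 2^k) = 2^m if k = 2 and t ≡ m (mod 4); N*_m(t, 2^k) = 2^{2m + (m-1)(k-3)} if k ≥ 3 and t ≡ m (mod 8); and N*_m(t, 2^k) = 0 otherwise. -/
/-- `sumSqUnitCount m n t` is the number of `m`-tuples of units of `ZMod n` whose
squares sum to `t`. -/
noncomputable def sumSqUnitCount (m n : ℕ) (t : ZMod n) : ℕ :=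
  Nat.card {x : Fin m → (ZMod n)ˣ // ∑ i, ((x i : ZMod n)) ^ 2 = t}

open Finset

/-! ### Auxiliary lemmas -/

lemma SSUC.two_pow_zmod' {n j : ℕ} (hj : n ≤ j) : ((2:ZMod (2^n)))^j = 0 := by
  have h1 : ((2:ZMod (2^n)))^n = 0 := by
    have := ZMod.natCast_self (2^n); push_cast at this; exact this
  calc ((2:ZMod (2^n)))^j = 2^(n + (j - n)) := by rw [Nat.add_sub_cancel' hj]
    _ = 2^n * 2^(j-n) := pow_add 2 n (j-n)
    _ = 0 := by rw [h1, zero_mul]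

lemma SSUC.sq_mod_lift {k : ℕ} (hk : 1 ≤ k) (a : ℕ) :
    (((a % 2^k : ℕ)) : ZMod (2^(k+1)))^2 = ((a : ℕ) : ZMod (2^(k+1)))^2 := by
  have h : a = 2^k * (a / 2^k) + a % 2^k := (Nat.div_add_mod a (2^k)).symm
  set q := a / 2^k with hq
  set b := a % 2^k with hb
  rw [h]
  push_cast
  have h4 : ((2:ZMod (2^(k+1))))^(k*2) = 0 := SSUC.two_pow_zmod' (by omega)
  have h5 : ((2:ZMod (2^(k+1))))^k * 2 = 0 := by
    calc ((2:ZMod (2^(k+1))))^k * 2 = 2^k * 2^1 := by norm_num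
      _ = 2^(k+1) := (pow_add 2 k 1).symm
      _ = 0 := SSUC.two_pow_zmod' (by omega)
  linear_combination (-(b*q : ZMod (2^(k+1)))) * h5 + (-(q^2 : ZMod (2^(k+1)))) * h4

lemma SSUC.castHom_eq_iff {k : ℕ} (a b : ZMod (2^(k+1))) :
    ZMod.castHom (pow_dvd_pow 2 (Nat.le_succ k)) (ZMod (2^k)) a
      = ZMod.castHom (pow_dvd_pow 2 (Nat.le_succ k)) (ZMod (2^k)) b
    ↔ a = b ∨ a = b + ((2^k : ℕ) : ZMod (2^(k+1))) := by
  have key : ∀ c : ZMod (2^(k+1)),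
      ZMod.castHom (pow_dvd_pow 2 (Nat.le_succ k)) (ZMod (2^k)) c = 0
        ↔ c = 0 ∨ c = ((2^k : ℕ) : ZMod (2^(k+1))) := by
    intro c
    rw [ZMod.castHom_apply, ← ZMod.natCast_val, ZMod.natCast_eq_zero_iff]
    constructor
    · rintro ⟨j, hj⟩
      have hlt : c.val < 2^(k+1) := ZMod.val_lt c
      have h2 : 2^(k+1) = 2^k * 2 := by rw [pow_succ]
      have hj2 : j < 2 := by
        by_contra hcon
        have := Nat.mul_le_mul_left (2^k) (show 2 ≤ j by omega)
        omega
      have hc : c = ((c.val : ℕ) : ZMod (2^(k+1))) := by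
        rw [ZMod.natCast_val, ZMod.cast_id]
      interval_cases j
      · left; rw [hc, hj]; simp
      · right; rw [hc, hj]; norm_num
    · rintro (rfl | rfl)
      · simp
      · rw [ZMod.val_natCast, Nat.mod_eq_of_lt (Nat.pow_lt_pow_succ (by norm_num))]
  constructor
  · intro h
    have h0 : ZMod.castHom (pow_dvd_pow 2 (Nat.le_succ k)) (ZMod (2^k)) (a - b) = 0 := by
      rw [map_sub, h, sub_self]
    rcases (key _).mp h0 with h' | h'
    · left; exact sub_eq_zero.mp h'
    · right; exact (sub_eq_iff_eq_add.mp h').trans (add_comm _ _)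
  · rintro (rfl | rfl)
    · rfl
    · rw [map_add, map_natCast, ZMod.natCast_self, add_zero]

lemma SSUC.isUnit_zmod_two_pow_of_odd {j a : ℕ} (ha : Odd a) :
    IsUnit ((a : ℕ) : ZMod (2^j)) := by
  rw [ZMod.isUnit_iff_coprime]
  exact Nat.Coprime.pow_right _ ha.coprime_two_right

lemma SSUC.odd_unit_val {k : ℕ} (hk : 1 ≤ k) (v : (ZMod (2^k))ˣ) :
    Odd ((v : ZMod (2^k)).val) := by
  have h := ZMod.val_coe_unit_coprime v
  have h2 : Nat.Coprime ((v : ZMod (2^k)).val) 2 :=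
    Nat.Coprime.coprime_dvd_right (dvd_pow_self 2 (by omega)) h
  exact h2.odd_of_right

lemma SSUC.isUnit_zmod_two_pow_iff {k : ℕ} (hk : 1 ≤ k) (x : ZMod (2^k)) :
    IsUnit x ↔ Odd x.val := by
  haveI : NeZero (2^k) := ⟨(pow_pos (by norm_num) k).ne'⟩
  constructor
  · intro hx
    have := SSUC.odd_unit_val hk hx.unit
    rwa [hx.unit_spec] at this
  · intro hodd
    have := SSUC.isUnit_zmod_two_pow_of_odd (j := k) hodd
    rwa [ZMod.natCast_val, ZMod.cast_id] at this

lemma SSUC.lift_exists {k : ℕ} (hk : 1 ≤ k) (v : (ZMod (2^k))ˣ) :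
    ∃ u : (ZMod (2^(k+1)))ˣ,
      Units.map (ZMod.castHom (pow_dvd_pow 2 (Nat.le_succ k)) (ZMod (2^k))).toMonoidHom u = v := by
  haveI : NeZero (2^k) := ⟨(pow_pos (by norm_num) k).ne'⟩
  refine ⟨(SSUC.isUnit_zmod_two_pow_of_odd (j := k+1) (SSUC.odd_unit_val hk v)).unit, ?_⟩
  ext
  rw [Units.coe_map]
  simp only [IsUnit.unit_spec, RingHom.toMonoidHom_eq_coe, MonoidHom.coe_coe, map_natCast]
  rw [ZMod.natCast_val, ZMod.cast_id]

lemma SSUC.card_fiber_units {k : ℕ} (hk : 1 ≤ k) (v : (ZMod (2^k))ˣ) :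
    Nat.card {u : (ZMod (2^(k+1)))ˣ //
      Units.map (ZMod.castHom (pow_dvd_pow 2 (Nat.le_succ k)) (ZMod (2^k))).toMonoidHom u = v}
      = 2 := by
  classical
  set π := (ZMod.castHom (pow_dvd_pow 2 (Nat.le_succ k)) (ZMod (2^k))).toMonoidHom with hπ
  obtain ⟨u0, hu0⟩ := SSUC.lift_exists hk v
  set f := Units.map π with hf
  have e1 : {u : (ZMod (2^(k+1)))ˣ // f u = v} ≃ {u : (ZMod (2^(k+1)))ˣ // f u = 1} :=
    { toFun := fun u => ⟨u.1 * u0⁻¹, by rw [map_mul, u.2, map_inv, hu0, mul_inv_cancel]⟩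
      invFun := fun c => ⟨c.1 * u0, by rw [map_mul, c.2, hu0, one_mul]⟩
      left_inv := fun u => by ext; simp
      right_inv := fun c => by ext; simp }
  rw [Nat.card_congr e1]
  have h2k : 2 ≤ 2^k := by
    have := Nat.one_lt_two_pow_iff.mpr (show k ≠ 0 by omega); omega
  have hlt : 2^k + 1 < 2^(k+1) := by rw [pow_succ]; omega
  have hwodd : Odd (2^k + 1) :=
    Even.add_one (Nat.even_pow.mpr ⟨even_iff_two_dvd.mpr dvd_rfl, by omega⟩)
  have hw : IsUnit ((2^k + 1 : ℕ) : ZMod (2^(k+1))) := SSUC.isUnit_zmod_two_pow_of_odd hwodd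
  set w := hw.unit with hwdef
  have hwcoe : (w : ZMod (2^(k+1))) = ((2^k + 1 : ℕ) : ZMod (2^(k+1))) := hw.unit_spec
  have hwne : (1 : (ZMod (2^(k+1)))ˣ) ≠ w := by
    intro hcon
    have hcoe : ((1 : ℕ) : ZMod (2^(k+1))) = ((2^k+1 : ℕ) : ZMod (2^(k+1))) := by
      have := congrArg (Units.val) hcon
      rw [hwcoe] at this
      simpa using this
    rw [ZMod.natCast_eq_natCast_iff', Nat.mod_eq_of_lt (by omega), Nat.mod_eq_of_lt hlt] at hcoe
    omega
  have hker : ∀ u : (ZMod (2^(k+1)))ˣ, f u = 1 ↔ u = 1 ∨ u = w := by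
    intro u
    have hcoe1 : ((2^k+1 : ℕ) : ZMod (2^(k+1))) = 1 + ((2^k : ℕ) : ZMod (2^(k+1))) := by
      push_cast; ring
    constructor
    · intro hu
      have hval : ZMod.castHom (pow_dvd_pow 2 (Nat.le_succ k)) (ZMod (2^k)) (u : ZMod (2^(k+1)))
          = ZMod.castHom (pow_dvd_pow 2 (Nat.le_succ k)) (ZMod (2^k)) (1 : ZMod (2^(k+1))) := by
        have h := congrArg (Units.val) hu
        rw [Units.coe_map, Units.val_one] at h
        rw [map_one]
        exact h
      rcases (SSUC.castHom_eq_iff _ _).mp hval with h' | h'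
      · left; ext; simpa using h'
      · right; ext; rw [h', hwcoe, hcoe1]
    · rintro (rfl | rfl)
      · simp
      · ext
        rw [Units.coe_map, hwcoe]
        show ZMod.castHom (pow_dvd_pow 2 (Nat.le_succ k)) (ZMod (2^k)) _ = _
        rw [map_natCast]
        push_cast
        rw [SSUC.two_pow_zmod' le_rfl]
        simp
  have e2 : {u : (ZMod (2^(k+1)))ˣ // f u = 1} ≃ ({1, w} : Set (ZMod (2^(k+1)))ˣ) :=
    Equiv.subtypeEquivRight (fun u => by rw [hker u]; simp)
  rw [Nat.card_congr e2, Nat.card_coe_set_eq, Set.ncard_pair hwne]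

lemma SSUC.card_fiber_tuple {k m : ℕ} (hk : 1 ≤ k) (y : Fin m → (ZMod (2^k))ˣ) :
    Nat.card {x : Fin m → (ZMod (2^(k+1)))ˣ //
      (fun i => Units.map (ZMod.castHom (pow_dvd_pow 2 (Nat.le_succ k)) (ZMod (2^k))).toMonoidHom
        (x i)) = y} = 2^m := by
  have e1 : {x : Fin m → (ZMod (2^(k+1)))ˣ //
      (fun i => Units.map (ZMod.castHom (pow_dvd_pow 2 (Nat.le_succ k)) (ZMod (2^k))).toMonoidHom
        (x i)) = y}
      ≃ ∀ i, {u : (ZMod (2^(k+1)))ˣ //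
        Units.map (ZMod.castHom (pow_dvd_pow 2 (Nat.le_succ k)) (ZMod (2^k))).toMonoidHom u
          = y i} :=
    (Equiv.subtypeEquivRight (fun x => funext_iff)).trans
      (Equiv.subtypePiEquivPi (p := fun i u =>
        Units.map (ZMod.castHom (pow_dvd_pow 2 (Nat.le_succ k)) (ZMod (2^k))).toMonoidHom u = y i))
  rw [Nat.card_congr e1, Nat.card_pi]
  rw [Finset.prod_congr rfl (fun i _ => SSUC.card_fiber_units hk (y i)), Finset.prod_const,
    Finset.card_univ, Fintype.card_fin]

lemma SSUC.card_subtype_comp {α β : Type*} [Finite α] [Finite β] (g : α → β) (P : β → Prop)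
    (c : ℕ) (hfib : ∀ y : β, Nat.card {x : α // g x = y} = c) :
    Nat.card {x : α // P (g x)} = Nat.card {y : β // P y} * c := by
  classical
  cases nonempty_fintype α
  cases nonempty_fintype β
  rw [← Nat.card_congr (Equiv.sigmaSubtypeFiberEquivSubtype g (p := fun x => P (g x))
    (q := P) (fun x => Iff.rfl))]
  rw [Nat.card_eq_fintype_card, Fintype.card_sigma]
  have h : ∀ y : {y : β // P y}, Fintype.card {x : α // g x = (y : β)} = c := fun y => by
    rw [← Nat.card_eq_fintype_card]; exact hfib y
  rw [Finset.sum_congr rfl (fun y _ => h y), Finset.sum_const, Finset.card_univ, smul_eq_mul,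
    ← Nat.card_eq_fintype_card]

lemma SSUC.shift_unit_isUnit {k : ℕ} (hk : 3 ≤ k) (u : (ZMod (2^k))ˣ) :
    IsUnit ((u : ZMod (2^k)) + ((2^(k-1) : ℕ) : ZMod (2^k))) := by
  haveI : NeZero (2^k) := ⟨(pow_pos (by norm_num) k).ne'⟩
  rw [SSUC.isUnit_zmod_two_pow_iff (by omega)]
  have hlt : 2^(k-1) < 2^k := Nat.pow_lt_pow_right (by norm_num) (by omega)
  rw [ZMod.val_add, ZMod.val_natCast, Nat.mod_eq_of_lt hlt]
  have hodd := SSUC.odd_unit_val (by omega : 1 ≤ k) u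
  rw [Nat.odd_iff] at hodd ⊢
  rw [Nat.mod_mod_of_dvd _ (dvd_pow_self 2 (by omega))]
  have h2 : 2 ∣ 2^(k-1) := dvd_pow_self 2 (by omega)
  omega

noncomputable def SSUC.shiftUnit {k : ℕ} (hk : 3 ≤ k) (u : (ZMod (2^k))ˣ) : (ZMod (2^k))ˣ :=
  (SSUC.shift_unit_isUnit hk u).unit

lemma SSUC.shiftUnit_coe {k : ℕ} (hk : 3 ≤ k) (u : (ZMod (2^k))ˣ) :
    (SSUC.shiftUnit hk u : ZMod (2^k)) = (u : ZMod (2^k)) + ((2^(k-1) : ℕ) : ZMod (2^k)) :=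
  (SSUC.shift_unit_isUnit hk u).unit_spec

lemma SSUC.shiftUnit_invol {k : ℕ} (hk : 3 ≤ k) (u : (ZMod (2^k))ˣ) :
    SSUC.shiftUnit hk (SSUC.shiftUnit hk u) = u := by
  ext
  rw [SSUC.shiftUnit_coe, SSUC.shiftUnit_coe, add_assoc, ← Nat.cast_add]
  have h : (2^(k-1) + 2^(k-1) : ℕ) = 2^k := by
    rw [← two_mul, ← pow_succ', show k-1+1 = k by omega]
  rw [h, ZMod.natCast_self, add_zero]

lemma SSUC.shiftUnit_sq {k : ℕ} (hk : 3 ≤ k) (u : (ZMod (2^k))ˣ) :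
    ((((SSUC.shiftUnit hk u : ZMod (2^k)).val : ℕ)) : ZMod (2^(k+1)))^2
      = ((((u : ZMod (2^k)).val : ℕ)) : ZMod (2^(k+1)))^2 + ((2^k : ℕ) : ZMod (2^(k+1))) := by
  haveI : NeZero (2^k) := ⟨(pow_pos (by norm_num) k).ne'⟩
  have hlt : 2^(k-1) < 2^k := Nat.pow_lt_pow_right (by norm_num) (by omega)
  have hv : (SSUC.shiftUnit hk u : ZMod (2^k)).val = ((u : ZMod (2^k)).val + 2^(k-1)) % 2^k := by
    rw [SSUC.shiftUnit_coe, ZMod.val_add, ZMod.val_natCast, Nat.mod_eq_of_lt hlt]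
  rw [hv, SSUC.sq_mod_lift (by omega)]
  obtain ⟨j, hj⟩ := SSUC.odd_unit_val (by omega : 1 ≤ k) u
  rw [hj]
  push_cast
  have hk4 : (2:ZMod (2^(k+1))) * 2^(k-1) = 2^k := by
    calc (2:ZMod (2^(k+1))) * 2^(k-1) = 2^1 * 2^(k-1) := by norm_num
      _ = 2^(1+(k-1)) := (pow_add 2 1 (k-1)).symm
      _ = 2^k := by rw [show 1+(k-1) = k by omega]
  have h5 : (2:ZMod (2^(k+1)))^(k-1) * 2^(k-1) = 0 := by
    calc (2:ZMod (2^(k+1)))^(k-1) * 2^(k-1) = 2^((k-1)+(k-1)) := (pow_add 2 (k-1) (k-1)).symm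
      _ = 0 := SSUC.two_pow_zmod' (by omega)
  have h6 : (2:ZMod (2^(k+1))) * 2^k = 0 := by
    calc (2:ZMod (2^(k+1))) * 2^k = 2^1 * 2^k := by norm_num
      _ = 2^(1+k) := (pow_add 2 1 k).symm
      _ = 0 := SSUC.two_pow_zmod' (by omega)
  linear_combination (2*(j:ZMod (2^(k+1)))+1)*hk4 + h5 + (j:ZMod (2^(k+1)))*h6

/-- The key inductive step: for `k ≥ 3` the count mod `2^(k+1)` is `2^(m-1)` times
the count mod `2^k`. -/
lemma SSUC.step {k m : ℕ} (hk : 3 ≤ k) (hm : 1 ≤ m) (t : ZMod (2^(k+1))) :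
    sumSqUnitCount m (2^(k+1)) t
      = 2^(m-1) * sumSqUnitCount m (2^k)
          (ZMod.castHom (pow_dvd_pow 2 (Nat.le_succ k)) (ZMod (2^k)) t) := by
  classical
  haveI i1 : NeZero (2^k) := ⟨(pow_pos (by norm_num) k).ne'⟩
  haveI i2 : NeZero (2^(k+1)) := ⟨(pow_pos (by norm_num) (k+1)).ne'⟩
  set c' : ZMod (2^(k+1)) := ((2^k : ℕ) : ZMod (2^(k+1))) with hc'
  set L : (Fin m → (ZMod (2^k))ˣ) → ZMod (2^(k+1)) :=
    fun y => ∑ i, ((((y i : ZMod (2^k)).val : ℕ) : ZMod (2^(k+1))))^2 with hLdef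
  set g : (Fin m → (ZMod (2^(k+1)))ˣ) → (Fin m → (ZMod (2^k))ˣ) :=
    fun x => fun i =>
      Units.map (ZMod.castHom (pow_dvd_pow 2 (Nat.le_succ k)) (ZMod (2^k))).toMonoidHom (x i)
    with hgdef
  have hL1 : ∀ x : Fin m → (ZMod (2^(k+1)))ˣ,
      (∑ i, ((x i : ZMod (2^(k+1))))^2) = L (g x) := by
    intro x
    refine Finset.sum_congr rfl (fun i _ => ?_)
    set a := ((x i : ZMod (2^(k+1)))).val with ha
    have hu : ((x i : ZMod (2^(k+1)))) = ((a : ℕ) : ZMod (2^(k+1))) := by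
      rw [ha, ZMod.natCast_val, ZMod.cast_id]
    have hval : ((g x i : ZMod (2^k))) = ((a : ℕ) : ZMod (2^k)) := by
      show ((Units.map (ZMod.castHom (pow_dvd_pow 2 (Nat.le_succ k))
        (ZMod (2^k))).toMonoidHom (x i) : ZMod (2^k))) = _
      rw [Units.coe_map]
      show ZMod.castHom (pow_dvd_pow 2 (Nat.le_succ k)) (ZMod (2^k)) _ = _
      rw [hu, map_natCast]
    rw [hval, ZMod.val_natCast, SSUC.sq_mod_lift (by omega), ← hu]
  have hL2 : ∀ y : Fin m → (ZMod (2^k))ˣ,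
      ZMod.castHom (pow_dvd_pow 2 (Nat.le_succ k)) (ZMod (2^k)) (L y)
        = ∑ i, ((y i : ZMod (2^k)))^2 := by
    intro y
    rw [hLdef]
    rw [map_sum]
    refine Finset.sum_congr rfl (fun i _ => ?_)
    rw [map_pow, map_natCast, ZMod.natCast_val, ZMod.cast_id]
  have count1 : sumSqUnitCount m (2^(k+1)) t
      = Nat.card {y : Fin m → (ZMod (2^k))ˣ // L y = t} * 2^m := by
    rw [sumSqUnitCount]
    rw [Nat.card_congr (Equiv.subtypeEquivRight (fun x => by rw [hL1 x]))]
    exact SSUC.card_subtype_comp g (fun y => L y = t) (2^m)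
      (fun y => SSUC.card_fiber_tuple (by omega) y)
  have hdisj : ∀ y : Fin m → (ZMod (2^k))ˣ, ¬ ((L y = t) ∧ (L y = t + c')) := by
    rintro y ⟨h1, h2⟩
    rw [h1] at h2
    have : c' = 0 := left_eq_add.mp h2
    rw [hc', ZMod.natCast_eq_zero_iff] at this
    have := Nat.le_of_dvd (pow_pos (by norm_num) k) this
    have := Nat.pow_lt_pow_succ (show 1 < 2 by norm_num) (n := k)
    omega
  have count2 : sumSqUnitCount m (2^k)
        (ZMod.castHom (pow_dvd_pow 2 (Nat.le_succ k)) (ZMod (2^k)) t)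
      = Nat.card {y : Fin m → (ZMod (2^k))ˣ // L y = t}
        + Nat.card {y : Fin m → (ZMod (2^k))ˣ // L y = t + c'} := by
    rw [sumSqUnitCount]
    have e : {y : Fin m → (ZMod (2^k))ˣ // ∑ i, ((y i : ZMod (2^k)))^2
          = ZMod.castHom (pow_dvd_pow 2 (Nat.le_succ k)) (ZMod (2^k)) t}
        ≃ {y : Fin m → (ZMod (2^k))ˣ // (L y = t) ∨ (L y = t + c')} := by
      refine Equiv.subtypeEquivRight (fun y => ?_)
      rw [← hL2 y]
      exact SSUC.castHom_eq_iff (L y) t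
    rw [Nat.card_congr e]
    rw [Nat.card_congr (subtypeOrEquiv _ _ (Pi.disjoint_iff.mpr
      (fun y => Prop.disjoint_iff.mpr (hdisj y))))]
    exact Nat.card_sum
  have count3 : Nat.card {y : Fin m → (ZMod (2^k))ˣ // L y = t}
      = Nat.card {y : Fin m → (ZMod (2^k))ˣ // L y = t + c'} := by
    have i0 : Fin m := ⟨0, by omega⟩
    have hLshift : ∀ y : Fin m → (ZMod (2^k))ˣ,
        L (Function.update y i0 (SSUC.shiftUnit hk (y i0))) = L y + c' := by
      intro y
      have hsplit : ∀ z : Fin m → (ZMod (2^k))ˣ,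
          L z = ((((z i0 : ZMod (2^k)).val : ℕ) : ZMod (2^(k+1))))^2
            + ∑ i ∈ Finset.univ.erase i0,
                ((((z i : ZMod (2^k)).val : ℕ) : ZMod (2^(k+1))))^2 := by
        intro z
        rw [hLdef]
        exact (Finset.add_sum_erase _ _ (Finset.mem_univ i0)).symm
      rw [hsplit, hsplit y, Function.update_self]
      rw [Finset.sum_congr rfl
        (fun i hi => by rw [Function.update_of_ne (Finset.ne_of_mem_erase hi)])]
      rw [SSUC.shiftUnit_sq hk]
      ring
    have hinvol : ∀ y : Fin m → (ZMod (2^k))ˣ,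
        Function.update (Function.update y i0 (SSUC.shiftUnit hk (y i0))) i0
          (SSUC.shiftUnit hk ((Function.update y i0 (SSUC.shiftUnit hk (y i0))) i0)) = y := by
      intro y
      funext i
      rcases eq_or_ne i i0 with rfl | hi
      · simp [Function.update_self, SSUC.shiftUnit_invol]
      · simp [Function.update_of_ne hi]
    have hcc : c' + c' = 0 := by
      rw [hc', ← Nat.cast_add]
      have h : (2^k + 2^k : ℕ) = 2^(k+1) := by
        have := pow_succ 2 k; omega
      rw [h, ZMod.natCast_self]
    refine Nat.card_congr ?_
    exact
      { toFun := fun y => ⟨Function.update y.1 i0 (SSUC.shiftUnit hk (y.1 i0)), by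
          rw [hLshift, y.2]⟩
        invFun := fun y => ⟨Function.update y.1 i0 (SSUC.shiftUnit hk (y.1 i0)), by
          have h := hLshift y.1
          rw [y.2, add_assoc, hcc, add_zero] at h
          exact h⟩
        left_inv := fun y => Subtype.ext (hinvol y.1)
        right_inv := fun y => Subtype.ext (hinvol y.1) }
  obtain ⟨m', rfl⟩ : ∃ m', m = m' + 1 := ⟨m - 1, by omega⟩
  rw [count1, count2, ← count3]
  simp only [Nat.add_sub_cancel]
  rw [show (2:ℕ)^(m'+1) = 2^m' * 2 from pow_succ 2 m']
  ring

/-- When every unit squares to `1`, the count is easy. -/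
lemma SSUC.count_of_sq_eq_one {n : ℕ} [NeZero n]
    (h1 : ∀ u : (ZMod n)ˣ, (u : ZMod n)^2 = 1) (m : ℕ) (t : ZMod n) :
    sumSqUnitCount m n t = if ((m : ZMod n) = t) then Nat.card (ZMod n)ˣ ^ m else 0 := by
  have key : ∀ x : Fin m → (ZMod n)ˣ, (∑ i, ((x i : ZMod n))^2) = (m : ZMod n) := by
    intro x
    simp [h1]
  rw [sumSqUnitCount]
  split_ifs with h
  · rw [Nat.card_congr (Equiv.subtypeUnivEquiv fun x => (key x).trans h)]
    rw [Nat.card_pi]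
    simp
  · have : IsEmpty {x : Fin m → (ZMod n)ˣ // ∑ i, ((x i : ZMod n)) ^ 2 = t} :=
      ⟨fun x => h ((key x.1).symm.trans x.2)⟩
    exact Nat.card_of_isEmpty

lemma SSUC.natCast_eq_iff_modEq {N : ℕ} [NeZero N] (m : ℕ) (t : ZMod N) :
    (m : ZMod N) = t ↔ t.val ≡ m [MOD N] := by
  constructor
  · intro h
    have h2 : ((t.val : ℕ) : ZMod N) = ((m : ℕ) : ZMod N) := by
      rw [ZMod.natCast_val, ZMod.cast_id, h]
    exact (ZMod.natCast_eq_natCast_iff _ _ _).mp h2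
  · intro h
    have h2 := (ZMod.natCast_eq_natCast_iff _ _ _).mpr h
    rw [ZMod.natCast_val, ZMod.cast_id] at h2
    exact h2.symm

lemma SSUC.card_units_8 : Nat.card (ZMod (2^3))ˣ = 4 := by
  simp only [Nat.card_eq_fintype_card]; decide
lemma SSUC.card_units_2 : Nat.card (ZMod (2^1))ˣ = 1 := by
  simp only [Nat.card_eq_fintype_card]; decide
lemma SSUC.card_units_4 : Nat.card (ZMod (2^2))ˣ = 2 := by
  simp only [Nat.card_eq_fintype_card]; decide

/-- The count for `k ≥ 3`. -/
lemma SSUC.count_ge3 {m : ℕ} (hm : 1 ≤ m) :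
    ∀ k, 3 ≤ k → ∀ t : ZMod (2^k),
      sumSqUnitCount m (2^k) t
        = if t.val ≡ m [MOD 8] then 2^(2*m + (m-1)*(k-3)) else 0 := by
  intro k hk
  induction k, hk using Nat.le_induction with
  | base =>
    intro t
    haveI : NeZero (2^3) := ⟨(pow_pos (by norm_num) 3).ne'⟩
    have hall : ∀ u : (ZMod (2^3))ˣ, (u : ZMod (2^3))^2 = 1 := by decide
    rw [SSUC.count_of_sq_eq_one hall m t]
    have hcard := SSUC.card_units_8
    have hcond : ((m : ZMod (2^3)) = t) ↔ t.val ≡ m [MOD 8] := by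
      rw [SSUC.natCast_eq_iff_modEq]
      norm_num
    rw [hcard, if_congr hcond rfl rfl]
    have h4 : (4:ℕ)^m = 2^(2*m + (m-1)*(3-3)) := by
      rw [show (4:ℕ) = 2^2 by norm_num, ← pow_mul, show 2*m + (m-1)*(3-3) = 2*m by omega]
    rw [h4]
  | succ k hk3 ih =>
    intro t
    haveI i1 : NeZero (2^k) := ⟨(pow_pos (by norm_num) k).ne'⟩
    rw [SSUC.step hk3 hm t, ih]
    have hval : (ZMod.castHom (pow_dvd_pow 2 (Nat.le_succ k)) (ZMod (2^k)) t).val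
        = t.val % 2^k := by
      rw [ZMod.castHom_apply, ← ZMod.natCast_val, ZMod.val_natCast]
    have hdvd8 : (8:ℕ) ∣ 2^k := by
      rw [show (8:ℕ) = 2^3 by norm_num]
      exact pow_dvd_pow 2 hk3
    have hmod : (t.val % 2^k) ≡ t.val [MOD 8] := (Nat.mod_modEq t.val (2^k)).of_dvd hdvd8
    have hcond : ((ZMod.castHom (pow_dvd_pow 2 (Nat.le_succ k)) (ZMod (2^k)) t).val ≡ m [MOD 8])
        ↔ (t.val ≡ m [MOD 8]) := by
      rw [hval]
      exact ⟨fun h => hmod.symm.trans h, fun h => hmod.trans h⟩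
    rw [if_congr hcond rfl rfl]
    split_ifs with h
    · rw [← pow_add]
      congr 1
      rw [show k+1-3 = (k-3)+1 by omega, Nat.mul_succ]
      ring
    · rw [mul_zero]

theorem stmt_0 (k m : ℕ) (hk : 1 ≤ k) (hm : 1 ≤ m) (t : ZMod (2 ^ k)) :
    sumSqUnitCount m (2 ^ k) t =
      if k = 1 ∧ t.val ≡ m [MOD 2] then 1
      else if k = 2 ∧ t.val ≡ m [MOD 4] then 2 ^ m
      else if 3 ≤ k ∧ t.val ≡ m [MOD 8] then 2 ^ (2 * m + (m - 1) * (k - 3))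
      else 0 := by
  by_cases hk1 : k = 1
  · subst hk1
    haveI : NeZero (2^1) := ⟨(pow_pos (by norm_num) 1).ne'⟩
    have hall : ∀ u : (ZMod (2^1))ˣ, (u : ZMod (2^1))^2 = 1 := by decide
    have hcard := SSUC.card_units_2
    have hcond : ((m : ZMod (2^1)) = t) ↔ t.val ≡ m [MOD 2] := by
      rw [SSUC.natCast_eq_iff_modEq]
      norm_num
    rw [SSUC.count_of_sq_eq_one hall m t, hcard]
    by_cases hc : t.val ≡ m [MOD 2]
    · rw [if_pos (hcond.mpr hc), if_pos (show (1 = 1 ∧ t.val ≡ m [MOD 2]) from ⟨rfl, hc⟩),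
        one_pow]
    · rw [if_neg (fun h => hc (hcond.mp h)),
        if_neg (show ¬(1 = 1 ∧ t.val ≡ m [MOD 2]) from fun h => hc h.2),
        if_neg (show ¬(1 = 2 ∧ t.val ≡ m [MOD 4]) from fun h => by exact absurd h.1 (by omega)),
        if_neg (show ¬(3 ≤ 1 ∧ t.val ≡ m [MOD 8]) from fun h => by exact absurd h.1 (by omega))]
  · by_cases hk2 : k = 2
    · subst hk2
      haveI : NeZero (2^2) := ⟨(pow_pos (by norm_num) 2).ne'⟩
      have hall : ∀ u : (ZMod (2^2))ˣ, (u : ZMod (2^2))^2 = 1 := by decide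
      have hcard := SSUC.card_units_4
      have hcond : ((m : ZMod (2^2)) = t) ↔ t.val ≡ m [MOD 4] := by
        rw [SSUC.natCast_eq_iff_modEq]
        norm_num
      rw [SSUC.count_of_sq_eq_one hall m t, hcard]
      by_cases hc : t.val ≡ m [MOD 4]
      · rw [if_pos (hcond.mpr hc),
          if_neg (show ¬(2 = 1 ∧ t.val ≡ m [MOD 2]) from fun h => by exact absurd h.1 (by omega)),
          if_pos (show (2 = 2 ∧ t.val ≡ m [MOD 4]) from ⟨rfl, hc⟩)]
      · rw [if_neg (fun h => hc (hcond.mp h)),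
          if_neg (show ¬(2 = 1 ∧ t.val ≡ m [MOD 2]) from fun h => by exact absurd h.1 (by omega)),
          if_neg (show ¬(2 = 2 ∧ t.val ≡ m [MOD 4]) from fun h => hc h.2),
          if_neg (show ¬(3 ≤ 2 ∧ t.val ≡ m [MOD 8]) from fun h => by exact absurd h.1 (by omega))]
    · have hk3 : 3 ≤ k := by omega
      rw [SSUC.count_ge3 hm k hk3 t,
        if_neg (show ¬(k = 1 ∧ t.val ≡ m [MOD 2]) from fun h => by exact absurd h.1 (by omega)),
        if_neg (show ¬(k = 2 ∧ t.val ≡ m [MOD 4]) from fun h => by exact absurd h.1 (by omega))]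
      by_cases hc : t.val ≡ m [MOD 8]
      · rw [if_pos hc, if_pos (show (3 ≤ k ∧ t.val ≡ m [MOD 8]) from ⟨hk3, hc⟩)]
      · rw [if_neg hc, if_neg (show ¬(3 ≤ k ∧ t.val ≡ m [MOD 8]) from fun h => hc h.2)]
end

section
/- For every m ≥ 1: N_m(t, 2) = 2^{m-1} for each t ∈ Z_2; and for t ∈ Z_4 (identified with a representative 0 ≤ t ≤ 3), N_m(t, 4) = 2^{2m-2} + (-1)^{t/2} · 2^{3m/2 - 1} · cos(mπ/4) if t is even, and N_m(t, 4) = 2^{2m-2} + (-1)^{(t-1)/2} · 2^{3m/2 - 1} · sin(mπ/4) if t is odd. -/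
/-!
Splitting off the first coordinate gives `N_{m+1}(t) = ∑_a N_m(t - a²)`. Over `ℤ/2` squaring is
the identity, so `N_{m+1}(t)` is the total number `2^m` of `m`-tuples. Over `ℤ/4` the squares are
`0, 1, 0, 1`, so `N_{m+1}(t) = 2 (N_m(t) + N_m(t - 1))`. Consequently `N_m(t) + N_m(t + 2) = 2 · 4^(m-1)`,
while `Z_m = (N_m(0) - N_m(2)) + (N_m(1) - N_m(3)) i` is multiplied by `2 + 2i = 2^(3/2) e^(iπ/4)`
at each step, so its real and imaginary parts are `2^(3m/2) cos(mπ/4)` and `2^(3m/2) sin(mπ/4)`.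
-/

/-- `sumSqCount m n t` is the number of `m`-tuples of elements of `ZMod n` whose
squares sum to `t`. -/
noncomputable def sumSqCount (m n : ℕ) (t : ZMod n) : ℕ :=
  Nat.card {x : Fin m → ZMod n // ∑ i, (x i) ^ 2 = t}

open Complex

lemma ZMod.sum_univ_four {M : Type*} [AddCommMonoid M] (f : ZMod 4 → M) :
    ∑ a, f a = f 0 + f 1 + f 2 + f 3 :=
  Fin.sum_univ_four f

lemma sumSqCount_zero (n : ℕ) (t : ZMod n) :
    sumSqCount 0 n t = if t = 0 then 1 else 0 := by
  simp only [sumSqCount, Finset.univ_eq_empty, Finset.sum_empty]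
  split_ifs with h
  · subst h
    simp
  · simp [Ne.symm h]

lemma sumSqCount_succ (m n : ℕ) [NeZero n] (t : ZMod n) :
    sumSqCount (m + 1) n t = ∑ a : ZMod n, sumSqCount m n (t - a ^ 2) := by
  let e : {p : ZMod n × (Fin m → ZMod n) // ∑ i, p.2 i ^ 2 = t - p.1 ^ 2} ≃
      {x : Fin (m + 1) → ZMod n // ∑ i, x i ^ 2 = t} :=
    (Fin.consEquiv fun _ => ZMod n).subtypeEquiv fun p => by
      simp [Fin.sum_univ_succ, eq_sub_iff_add_eq']
  rw [sumSqCount, ← Nat.card_congr e,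
    Nat.card_congr (Equiv.subtypeProdEquivSigmaSubtype
      fun (a : ZMod n) (y : Fin m → ZMod n) => ∑ i, y i ^ 2 = t - a ^ 2),
    Nat.card_sigma]
  rfl

lemma sum_sumSqCount (m n : ℕ) [NeZero n] : ∑ t, sumSqCount m n t = n ^ m := by
  simp only [sumSqCount]
  rw [← Nat.card_sigma, Nat.card_congr (Equiv.sigmaFiberEquiv _), Nat.card_eq_fintype_card,
    Fintype.card_fun, ZMod.card, Fintype.card_fin]

lemma sumSqCount_two (m : ℕ) (t : ZMod 2) : sumSqCount (m + 1) 2 t = 2 ^ m := by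
  simp only [sumSqCount_succ, ZMod.pow_card, ← sum_sumSqCount m 2]
  exact Fintype.sum_equiv (Equiv.subLeft t) _ _ fun _ => rfl

lemma sumSqCount_four_succ (m : ℕ) (t : ZMod 4) :
    sumSqCount (m + 1) 4 t = 2 * (sumSqCount m 4 t + sumSqCount m 4 (t - 1)) := by
  rw [sumSqCount_succ, ZMod.sum_univ_four, show (2 : ZMod 4) ^ 2 = 0 by decide,
    show (3 : ZMod 4) ^ 2 = 1 by decide]
  simp only [ne_eq, OfNat.ofNat_ne_zero, not_false_eq_true, zero_pow, sub_zero, one_pow]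
  ring

lemma sumSqCount_four_add_sumSqCount_four_add_two (m : ℕ) (t : ZMod 4) :
    sumSqCount (m + 1) 4 t + sumSqCount (m + 1) 4 (t + 2) = 2 * 4 ^ m := by
  have h3 : t - 1 = t + 3 := by decide +revert
  have h1 : t + 2 - 1 = t + 1 := by decide +revert
  rw [← sum_sumSqCount m 4, ← Fintype.sum_equiv (Equiv.addLeft t) (fun a => sumSqCount m 4 (t + a))
    _ fun _ => rfl, ZMod.sum_univ_four, sumSqCount_four_succ, sumSqCount_four_succ, h3, h1, add_zero]
  ring

lemma sumSqCount_four_sub_add_sub_mul_I (m : ℕ) :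
    ((sumSqCount m 4 0 : ℂ) - sumSqCount m 4 2) + ((sumSqCount m 4 1 : ℂ) - sumSqCount m 4 3) * I =
      (2 + 2 * I) ^ m := by
  induction m with
  | zero =>
    simp [sumSqCount_zero, show (1 : ZMod 4) ≠ 0 by decide, show (2 : ZMod 4) ≠ 0 by decide,
      show (3 : ZMod 4) ≠ 0 by decide]
  | succ m ih =>
    rw [pow_succ, ← ih]
    simp only [sumSqCount_four_succ, show (0 : ZMod 4) - 1 = 3 by decide, sub_self,
      show (2 : ZMod 4) - 1 = 1 by decide, show (3 : ZMod 4) - 1 = 2 by decide]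
    push_cast
    linear_combination (-(2 : ℂ) * ((sumSqCount m 4 1 : ℂ) - sumSqCount m 4 3)) * I_sq

lemma two_add_two_mul_I_pow (m : ℕ) :
    (2 + 2 * I) ^ m = ((2 : ℝ) ^ (3 * (m : ℝ) / 2) * Real.cos (m * Real.pi / 4) : ℝ) +
      ((2 : ℝ) ^ (3 * (m : ℝ) / 2) * Real.sin (m * Real.pi / 4) : ℝ) * I := by
  have hpolar : 2 + 2 * I =
      ((2 : ℝ) ^ (3 / 2 : ℝ) : ℝ) * (cos (Real.pi / 4 : ℝ) + sin (Real.pi / 4 : ℝ) * I) := by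
    rw [← ofReal_cos, ← ofReal_sin, Real.cos_pi_div_four, Real.sin_pi_div_four,
      show (3 / 2 : ℝ) = 1 + 1 / 2 by norm_num, Real.rpow_add two_pos, Real.rpow_one,
      ← Real.sqrt_eq_rpow]
    have hsq : ((√2 : ℝ) : ℂ) * √2 = 2 := by
      rw [← ofReal_mul, Real.mul_self_sqrt zero_le_two, ofReal_ofNat]
    push_cast
    linear_combination (-(1 + I) : ℂ) * hsq
  rw [hpolar, mul_pow, cos_add_sin_mul_I_pow, ← ofReal_pow, ← Real.rpow_natCast,
    ← Real.rpow_mul zero_le_two]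
  push_cast
  ring_nf

lemma sumSqCount_four_zero_sub_two (m : ℕ) :
    (sumSqCount m 4 0 : ℝ) - sumSqCount m 4 2 = 2 ^ (3 * (m : ℝ) / 2) * Real.cos (m * Real.pi / 4) := by
  have h := congrArg re ((sumSqCount_four_sub_add_sub_mul_I m).trans (two_add_two_mul_I_pow m))
  simp only [add_re, sub_re, sub_im, mul_re, ofReal_re, ofReal_im, natCast_re, natCast_im, I_re,
    I_im] at h
  linarith

lemma sumSqCount_four_one_sub_three (m : ℕ) :
    (sumSqCount m 4 1 : ℝ) - sumSqCount m 4 3 = 2 ^ (3 * (m : ℝ) / 2) * Real.sin (m * Real.pi / 4) := by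
  have h := congrArg im ((sumSqCount_four_sub_add_sub_mul_I m).trans (two_add_two_mul_I_pow m))
  simp only [add_im, sub_re, sub_im, mul_im, ofReal_re, ofReal_im, natCast_re, natCast_im, I_re,
    I_im] at h
  linarith

theorem stmt_1 (m : ℕ) (hm : 1 ≤ m) :
    (∀ t : ZMod 2, sumSqCount m 2 t = 2 ^ (m - 1)) ∧
    (∀ t : ZMod 4,
      (t.val % 2 = 0 →
        (sumSqCount m 4 t : ℝ) =
          2 ^ (2 * m - 2) +
            (-1 : ℝ) ^ (t.val / 2) * (2 : ℝ) ^ (3 * (m : ℝ) / 2 - 1) *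
              Real.cos (m * Real.pi / 4)) ∧
      (t.val % 2 = 1 →
        (sumSqCount m 4 t : ℝ) =
          2 ^ (2 * m - 2) +
            (-1 : ℝ) ^ ((t.val - 1) / 2) * (2 : ℝ) ^ (3 * (m : ℝ) / 2 - 1) *
              Real.sin (m * Real.pi / 4))) := by
  obtain ⟨k, rfl⟩ := Nat.exists_eq_add_of_le' hm
  refine ⟨fun t => by simpa using sumSqCount_two k t, fun t => ?_⟩
  have h02 : (sumSqCount (k + 1) 4 0 : ℝ) + sumSqCount (k + 1) 4 2 = 2 * 4 ^ k := by
    exact_mod_cast sumSqCount_four_add_sumSqCount_four_add_two k 0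
  have h13 : (sumSqCount (k + 1) 4 1 : ℝ) + sumSqCount (k + 1) 4 3 = 2 * 4 ^ k := by
    exact_mod_cast sumSqCount_four_add_sumSqCount_four_add_two k 1
  have hcos := sumSqCount_four_zero_sub_two (k + 1)
  have hsin := sumSqCount_four_one_sub_three (k + 1)
  have hpow : (2 : ℝ) ^ (2 * (k + 1) - 2) = 4 ^ k := by
    rw [show 2 * (k + 1) - 2 = 2 * k by omega, pow_mul]
    norm_num
  rw [hpow, Real.rpow_sub_one two_ne_zero]
  push_cast at hcos hsin
  have hval : (0 : ZMod 4).val = 0 ∧ (1 : ZMod 4).val = 1 ∧ (2 : ZMod 4).val = 2 ∧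
      (3 : ZMod 4).val = 3 := ⟨rfl, rfl, rfl, rfl⟩
  obtain rfl | rfl | rfl | rfl : t = 0 ∨ t = 1 ∨ t = 2 ∨ t = 3 := by decide +revert
  all_goals simp [hval]; linarith
end

section
/- Let k ≥ 2 and t ∈ Z_{2^k}. If t = 0 then N_2(t, 2^k) = 2^k. If t ≠ 0, write t = 2^α β with β odd and 0 ≤ α < k. Then N_2(t, 2^k) = 2^{k+1} if 0 ≤ α < k−1 and β ≡ 1 (mod 4); N_2(t, 2^k) = 0 if 0 ≤ α < k−1 and β ≡ 3 (mod 4); and N_2(t, 2^k) = 2^k if α = k−1. -/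
open Finset

theorem AddMonoidHom.card_filter_comp_eq_mul {G M : Type*} [AddGroup G] [Fintype G] [AddGroup M]
    [Fintype M] [DecidableEq M] (f : G →+ M) (p : M → Prop) [DecidablePred p]
    (hp : ∀ m, p m → m ∈ Set.range f) :
    #{g | p (f g)} = #{g | f g = 0} * #{m | p m} := by
  have hfib : ∀ m ∈ ({m | p m} : Finset M), #{g | f g = m} = #{g | f g = 0} := fun m hm =>
    AddMonoidHom.card_fiber_eq_of_mem_range f (hp m (mem_filter.1 hm).2) ⟨0, map_zero f⟩
  rw [mul_comm, ← sum_const_nat hfib, sum_card_fiberwise_eq_card_filter]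
  simp only [mem_filter, mem_univ, true_and]

theorem ZMod.natCast_mul_eq_zero_iff_castHom {n c m : ℕ} (hn : n = c * m) (hc : c ≠ 0)
    (z : ZMod n) :
    (c : ZMod n) * z = 0 ↔ ZMod.castHom (Dvd.intro_left c hn.symm) (ZMod m) z = 0 := by
  subst hn
  rw [← ZMod.intCast_zmod_cast z, map_intCast, ← Int.cast_natCast, ← Int.cast_mul,
    ZMod.intCast_zmod_eq_zero_iff_dvd, ZMod.intCast_zmod_eq_zero_iff_dvd, Nat.cast_mul,
    Int.mul_dvd_mul_iff_left (by exact_mod_cast hc)]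

theorem ZMod.castHom_two_mul_eq_zero_iff {m : ℕ} [NeZero m] (z : ZMod (2 * m)) :
    ZMod.castHom (dvd_mul_left m 2) (ZMod m) z = 0 ↔ z = 0 ∨ z = m := by
  have hm := NeZero.pos m
  have hmval : (m : ZMod (2 * m)).val = m := ZMod.val_cast_of_lt (by omega)
  have hz := z.val_lt
  rw [ZMod.castHom_apply, ZMod.cast_eq_val, ZMod.natCast_eq_zero_iff, ← ZMod.val_eq_zero,
    ← ZMod.val_injective _ |>.eq_iff, hmval]
  constructor
  · rintro ⟨q, hq⟩
    have : q < 2 := by nlinarith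
    interval_cases q <;> omega
  · rintro (h | h) <;> simp [h]

theorem ZMod.card_filter_castHom_eq_mul {n c m : ℕ} [NeZero n] [NeZero m] (hn : n = c * m)
    (p : ZMod m × ZMod m → Prop) [DecidablePred p] :
    #{g : ZMod n × ZMod n | p (ZMod.castHom (Dvd.intro_left c hn.symm) (ZMod m) g.1,
      ZMod.castHom (Dvd.intro_left c hn.symm) (ZMod m) g.2)} = c ^ 2 * #{q | p q} := by
  set ρ := (ZMod.castHom (Dvd.intro_left c hn.symm) (ZMod m)).toAddMonoidHom
  have hsurj : ∀ q, q ∈ Set.range (ρ.prodMap ρ) := by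
    intro q
    obtain ⟨a, ha⟩ := ZMod.castHom_surjective (Dvd.intro_left c hn.symm) q.1
    obtain ⟨b, hb⟩ := ZMod.castHom_surjective (Dvd.intro_left c hn.symm) q.2
    exact ⟨(a, b), Prod.ext ha hb⟩
  have hker := (ρ.prodMap ρ).card_filter_comp_eq_mul (fun _ => True) (fun q _ => hsurj q)
  simp only [filter_true, card_univ, Fintype.card_prod, ZMod.card, hn] at hker
  have hm := NeZero.pos m
  have hker' : #{g | (ρ.prodMap ρ) g = 0} = c ^ 2 := by
    apply Nat.eq_of_mul_eq_mul_right (Nat.mul_pos hm hm)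
    rw [← hker]; ring
  rw [← hker', ← (ρ.prodMap ρ).card_filter_comp_eq_mul p (fun q _ => hsurj q)]
  rfl

theorem ZMod.even_or_odd {n : ℕ} (x : ZMod n) : Even x ∨ Odd x := by
  rw [← ZMod.intCast_zmod_cast x]
  exact (Int.even_or_odd _).imp Even.intCast Odd.intCast

theorem ZMod.four_mul_ne_natCast {n : ℕ} (hn : 4 ∣ n) (w : ZMod n) {t : ℕ} (ht : ¬ 4 ∣ t) :
    4 * w ≠ t := by
  intro h
  have h4 := congrArg (ZMod.castHom hn (ZMod 4)) h
  rw [map_mul, map_natCast, show ((4 : ZMod n)) = ((4 : ℕ) : ZMod n) by norm_cast, map_natCast,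
    ZMod.natCast_self, zero_mul, eq_comm, ZMod.natCast_eq_zero_iff] at h4
  exact ht h4

theorem ZMod.even_and_even_of_sq_add_sq_eq_four_mul {n : ℕ} (hn : 4 ∣ n) {x y w : ZMod n}
    (h : x ^ 2 + y ^ 2 = 4 * w) : Even x ∧ Even y := by
  have key : ∀ x y : ZMod n, x ^ 2 + y ^ 2 = 4 * w → Even x := by
    intro x y h
    refine (ZMod.even_or_odd x).resolve_right ?_
    rintro ⟨a, rfl⟩
    rcases ZMod.even_or_odd y with ⟨b, rfl⟩ | ⟨b, rfl⟩
    · exact ZMod.four_mul_ne_natCast hn (w - a ^ 2 - a - b ^ 2) (t := 1) (by norm_num)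
        (by push_cast; linear_combination -h)
    · exact ZMod.four_mul_ne_natCast hn (w - a ^ 2 - a - b ^ 2 - b) (t := 2) (by norm_num)
        (by push_cast; linear_combination -h)
  exact ⟨key x y h, key y x (by linear_combination h)⟩

theorem ZMod.two_pow_eq_zero {n e : ℕ} (h : n ≤ e) : (2 : ZMod (2 ^ n)) ^ e = 0 := by
  exact_mod_cast (ZMod.natCast_eq_zero_iff _ _).2 (pow_dvd_pow 2 h)

def twoSqCount (R : Type*) [CommRing R] [Fintype R] [DecidableEq R] (t : R) : ℕ :=
  #{p : R × R | p.1 ^ 2 + p.2 ^ 2 = t}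

theorem sumSqCount_two_eq_twoSqCount (n : ℕ) [NeZero n] (t : ZMod n) :
    sumSqCount 2 n t = twoSqCount (ZMod n) t := by
  rw [sumSqCount, twoSqCount, ← Fintype.card_subtype, ← Nat.card_eq_fintype_card]
  exact Nat.card_congr <| (finTwoArrowEquiv _).subtypeEquiv fun x => by simp [Fin.sum_univ_two]

theorem add_sq_of_odd {R : Type*} [CommRing R] {x c : R} (hx : Odd x) (hc2 : c ^ 2 = 0)
    (hc4 : 4 * c = 0) : (x + c) ^ 2 = x ^ 2 + 2 * c := by
  obtain ⟨j, rfl⟩ := hx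
  linear_combination hc2 + j * hc4

section Shift

variable {R : Type*} [CommRing R] [Fintype R] [DecidableEq R] {c : R}

theorem twoSqCount_le_twoSqCount_add (hc : Even c) (hc2 : c ^ 2 = 0) (hc4 : 4 * c = 0) {t : R}
    (ht : ∀ x y : R, x ^ 2 + y ^ 2 = t → Odd x ∨ Odd y) :
    twoSqCount R t ≤ twoSqCount R (t + 2 * c) := by
  classical
  have hodd : ∀ x : R, Odd (x + c) ↔ Odd x :=
    fun x => ⟨fun h => by simpa using h.sub_even hc, fun h => h.add_even hc⟩
  refine card_le_card_of_injOn (fun p => if Odd p.1 then (p.1 + c, p.2) else (p.1, p.2 + c))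
    (fun p hp => ?_) (fun p _ q _ hpq => ?_)
  · simp only [coe_filter, mem_univ, true_and, Set.mem_ofPred_eq] at hp ⊢
    split_ifs with hx
    · rw [add_sq_of_odd hx hc2 hc4]; linear_combination hp
    · rw [add_sq_of_odd ((ht _ _ hp).resolve_left hx) hc2 hc4]; linear_combination hp
  · simp only at hpq
    split_ifs at hpq with hp hq hq <;> simp only [Prod.mk.injEq] at hpq
    · exact Prod.ext (add_right_cancel hpq.1) hpq.2
    · exact absurd (hpq.1 ▸ (hodd _).2 hp) hq
    · exact absurd (hpq.1 ▸ (hodd _).2 hq) hp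
    · exact Prod.ext hpq.1 (add_right_cancel hpq.2)

theorem twoSqCount_add_eq (hR : ∀ x : R, Even x ∨ Odd x) (hc : Even c) (hc2 : c ^ 2 = 0)
    (hc4 : 4 * c = 0) {t : R} (ht : ¬ (4 : R) ∣ t) :
    twoSqCount R (t + 2 * c) = twoSqCount R t := by
  obtain ⟨e, rfl⟩ := hc
  have hodd : ∀ t : R, ¬ (4 : R) ∣ t → ∀ x y : R, x ^ 2 + y ^ 2 = t → Odd x ∨ Odd y := by
    intro t ht x y hxy
    by_contra! h
    obtain ⟨⟨a, rfl⟩, ⟨b, rfl⟩⟩ := And.intro ((hR x).resolve_right h.1) ((hR y).resolve_right h.2)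
    exact ht ⟨a ^ 2 + b ^ 2, by linear_combination -hxy⟩
  have ht' : ¬ (4 : R) ∣ t + 2 * (e + e) := by
    rintro ⟨z, hz⟩
    exact ht ⟨z - e, by linear_combination hz⟩
  refine le_antisymm ?_ (twoSqCount_le_twoSqCount_add ⟨e, rfl⟩ hc2 hc4 (hodd t ht))
  calc twoSqCount R (t + 2 * (e + e))
      ≤ twoSqCount R (t + 2 * (e + e) + 2 * (e + e)) :=
        twoSqCount_le_twoSqCount_add ⟨e, rfl⟩ hc2 hc4 (hodd _ ht')
    _ = twoSqCount R t := by congr 1; linear_combination hc4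

end Shift

theorem twoSqCount_add_twoSqCount_add_eq_four_mul {n m : ℕ} [NeZero n] [NeZero m] (hn : n = 2 * m)
    (t : ℕ) : twoSqCount (ZMod n) t + twoSqCount (ZMod n) (t + m) = 4 * twoSqCount (ZMod m) t := by
  subst hn
  have hreduce := ZMod.card_filter_castHom_eq_mul (c := 2) rfl
    (fun q : ZMod m × ZMod m => q.1 ^ 2 + q.2 ^ 2 = t)
  have hm : (m : ZMod (2 * m)) ≠ 0 := by
    rw [Ne, ZMod.natCast_eq_zero_iff]
    exact Nat.not_dvd_of_pos_of_lt (NeZero.pos m) (by linarith [NeZero.pos m])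
  rw [twoSqCount, twoSqCount, twoSqCount, ← card_union_of_disjoint, (by norm_num : 4 = 2 ^ 2),
    ← hreduce]
  · congr 1
    ext g
    simp only [mem_union, mem_filter, mem_univ, true_and]
    rw [iff_comm, ← map_pow, ← map_pow, ← map_add,
      ← map_natCast (ZMod.castHom (dvd_mul_left m 2) (ZMod m)), ← sub_eq_zero, ← map_sub,
      ZMod.castHom_two_mul_eq_zero_iff, sub_eq_zero, sub_eq_iff_eq_add']
  · rw [disjoint_filter]
    intro g _ h1 h2
    exact hm (by linear_combination h1 - h2)

theorem twoSqCount_four_mul {n m : ℕ} [NeZero n] [NeZero m] (hn : n = 4 * m) (s : ℕ) :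
    twoSqCount (ZMod n) (4 * s : ℕ) = 4 * twoSqCount (ZMod m) s := by
  subst hn
  set μ := (AddMonoidHom.mulLeft ((2 : ℕ) : ZMod (4 * m))).prodMap
    (AddMonoidHom.mulLeft ((2 : ℕ) : ZMod (4 * m)))
  have hrange : ∀ q : ZMod (4 * m) × ZMod (4 * m), q.1 ^ 2 + q.2 ^ 2 = (4 * s : ℕ) →
      q ∈ Set.range μ := by
    intro q hq
    push_cast at hq
    obtain ⟨⟨u, hu⟩, ⟨v, hv⟩⟩ := ZMod.even_and_even_of_sq_add_sq_eq_four_mul (dvd_mul_right 4 m) hq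
    exact ⟨(u, v), Prod.ext (by simp [μ, hu, two_mul]) (by simp [μ, hv, two_mul])⟩
  -- count the pairs `(u, v)` with `(2u)² + (2v)² = 4s` through `μ` and through reduction mod `m`
  have hfib := μ.card_filter_comp_eq_mul _ hrange
  have hker : #{g | μ g = 0} = 4 := by
    have := ZMod.card_filter_castHom_eq_mul (n := 4 * m) (c := 2) (m := 2 * m) (by ring)
      (fun q => q = 0)
    rw [filter_eq', if_pos (mem_univ _), card_singleton] at this
    refine Eq.trans (congrArg card (filter_congr fun g _ => ?_)) this
    simp only [Prod.ext_iff, μ, AddMonoidHom.coe_prodMap,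
      Prod.map_fst, Prod.map_snd, AddMonoidHom.coe_mulLeft, Prod.fst_zero, Prod.snd_zero]
    rw [ZMod.natCast_mul_eq_zero_iff_castHom (m := 2 * m) (by ring) two_ne_zero,
      ZMod.natCast_mul_eq_zero_iff_castHom (m := 2 * m) (by ring) two_ne_zero]
  have hlift : #{g | (μ g).1 ^ 2 + (μ g).2 ^ 2 = (4 * s : ℕ)} = 16 * twoSqCount (ZMod m) s := by
    have := ZMod.card_filter_castHom_eq_mul (n := 4 * m) (c := 4) (m := m) rfl
      (fun q => q.1 ^ 2 + q.2 ^ 2 = s)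
    refine Eq.trans (congrArg card (filter_congr fun g _ => ?_)) this
    simp only [μ, AddMonoidHom.coe_prodMap,
      Prod.map_fst, Prod.map_snd, AddMonoidHom.coe_mulLeft]
    rw [← sub_eq_zero, show ((2 : ℕ) * g.1) ^ 2 + ((2 : ℕ) * g.2) ^ 2 - ((4 * s : ℕ) : ZMod (4 * m))
        = ((4 : ℕ) : ZMod (4 * m)) * (g.1 ^ 2 + g.2 ^ 2 - s) by push_cast; ring,
      ZMod.natCast_mul_eq_zero_iff_castHom rfl four_ne_zero, map_sub, map_add, map_pow, map_pow,
      map_natCast, sub_eq_zero]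
  rw [hker, hlift] at hfib
  rw [twoSqCount]
  omega

theorem twoSqCount_two_pow_succ {k : ℕ} (hk : 3 ≤ k) {t : ℕ} (ht : ¬ 4 ∣ t) :
    twoSqCount (ZMod (2 ^ (k + 1))) t = 2 * twoSqCount (ZMod (2 ^ k)) t := by
  have hsum :=
    twoSqCount_add_twoSqCount_add_eq_four_mul (n := 2 ^ (k + 1)) (m := 2 ^ k) (pow_succ' 2 k) t
  have hshift := twoSqCount_add_eq ZMod.even_or_odd (c := (2 : ZMod (2 ^ (k + 1))) ^ (k - 1))
    ⟨2 ^ (k - 2), by rw [← two_mul, ← pow_succ']; congr 1; omega⟩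
    (by rw [← pow_mul]; exact ZMod.two_pow_eq_zero (by omega))
    (by rw [show (4 : ZMod (2 ^ (k + 1))) = 2 ^ 2 by norm_num, ← pow_add]
        exact ZMod.two_pow_eq_zero (by omega))
    (t := t) (fun ⟨z, hz⟩ => ZMod.four_mul_ne_natCast (Dvd.intro (2 ^ (k - 1)) (by
      rw [show 4 = 2 ^ 2 by rfl, ← pow_add]; congr 1; omega)) z ht hz.symm)
  rw [← pow_succ', show k - 1 + 1 = k by omega] at hshift
  push_cast at hsum
  omega

theorem twoSqCount_two_pow_one (t : ℕ) : twoSqCount (ZMod (2 ^ 1)) t = 2 := by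
  rw [← ZMod.natCast_mod]
  have : ∀ r : ℕ, r < 2 → twoSqCount (ZMod (2 ^ 1)) r = 2 := by decide
  exact this (t % 2 ^ 1) (Nat.mod_lt _ (by norm_num))

theorem twoSqCount_two_pow_two {t : ℕ} (ht : ¬ 4 ∣ t) :
    twoSqCount (ZMod (2 ^ 2)) t = if t % 4 = 1 then 8 else if t % 4 = 2 then 4 else 0 := by
  have : ∀ r : ℕ, r < 4 → ¬ 4 ∣ r →
      twoSqCount (ZMod (2 ^ 2)) r = if r % 4 = 1 then 8 else if r % 4 = 2 then 4 else 0 := by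
    decide
  rw [← ZMod.natCast_mod, this (t % 2 ^ 2) (Nat.mod_lt _ (by norm_num)) (by norm_num; omega)]
  simp only [Nat.reducePow, Nat.mod_mod]

theorem twoSqCount_two_pow_of_not_four_dvd {k : ℕ} (hk : 3 ≤ k) {t : ℕ} (ht : ¬ 4 ∣ t) :
    twoSqCount (ZMod (2 ^ k)) t = if t % 4 = 1 ∨ t % 8 = 2 then 2 ^ (k + 1) else 0 := by
  induction k, hk using Nat.le_induction with
  | base =>
    have : ∀ r : ℕ, r < 8 → ¬ 4 ∣ r →
        twoSqCount (ZMod (2 ^ 3)) r = if r % 4 = 1 ∨ r % 8 = 2 then 2 ^ (3 + 1) else 0 := by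
      decide
    rw [← ZMod.natCast_mod, this (t % 2 ^ 3) (Nat.mod_lt _ (by norm_num)) (by norm_num; omega)]
    simp only [Nat.reducePow, Nat.mod_mod_of_dvd t (by norm_num : 4 ∣ 8), Nat.mod_mod]
  | succ k hk ih =>
    rw [twoSqCount_two_pow_succ hk ht, ih, mul_ite, mul_zero, ← pow_succ']

theorem twoSqCount_two_pow_zero : ∀ k : ℕ, twoSqCount (ZMod (2 ^ k)) 0 = 2 ^ k
  | 0 => by decide
  | 1 => by decide
  | k + 2 => by
    have h := twoSqCount_four_mul (n := 2 ^ (k + 2)) (m := 2 ^ k) (by ring) 0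
    rw [mul_zero, Nat.cast_zero, Nat.cast_zero] at h
    rw [h, twoSqCount_two_pow_zero k]
    ring

theorem twoSqCount_two_pow_mul_odd {k α β : ℕ} (hβ : Odd β) (hα : α < k) :
    twoSqCount (ZMod (2 ^ k)) (2 ^ α * β : ℕ) =
      if α + 1 < k then (if β % 4 = 1 then 2 ^ (k + 1) else 0) else 2 ^ k := by
  induction α using Nat.strong_induction_on generalizing k with
  | _ α ih =>
  have hβ4 := Nat.odd_iff.mp hβ
  rcases α with _ | _ | α
  · rcases k with _ | _ | _ | k
    · omega
    · simpa using twoSqCount_two_pow_one β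
    · rw [twoSqCount_two_pow_two (by omega)]; split_ifs <;> omega
    · rw [twoSqCount_two_pow_of_not_four_dvd (by omega) (by omega)]; split_ifs <;> omega
  · rcases k with _ | _ | _ | k
    · omega
    · omega
    · rw [twoSqCount_two_pow_two (by omega)]; split_ifs <;> omega
    · rw [twoSqCount_two_pow_of_not_four_dvd (by omega) (by omega)]; split_ifs <;> omega
  · obtain ⟨k, rfl⟩ : ∃ k', k = k' + 2 := ⟨k - 2, by omega⟩
    rw [show 2 ^ (α + 2) * β = 4 * (2 ^ α * β) by ring,
      twoSqCount_four_mul (n := 2 ^ (k + 2)) (m := 2 ^ k) (by ring), ih α (by omega) (by omega)]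
    split_ifs <;> first | omega | ring

theorem stmt_2_general (k : ℕ) (t : ZMod (2 ^ k)) :
    (t = 0 → sumSqCount 2 (2 ^ k) t = 2 ^ k) ∧
    (∀ α β : ℕ, t ≠ 0 → t.val = 2 ^ α * β → Odd β → α < k →
      ((α < k - 1 ∧ β % 4 = 1 → sumSqCount 2 (2 ^ k) t = 2 ^ (k + 1)) ∧
       (α < k - 1 ∧ β % 4 = 3 → sumSqCount 2 (2 ^ k) t = 0) ∧
       (α = k - 1 → sumSqCount 2 (2 ^ k) t = 2 ^ k))) := by
  rw [sumSqCount_two_eq_twoSqCount]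
  refine ⟨fun ht => ht ▸ twoSqCount_two_pow_zero k, fun α β _ hval hβ hα => ?_⟩
  have ht : t = ((2 ^ α * β : ℕ) : ZMod (2 ^ k)) := by rw [← hval, ZMod.natCast_zmod_val]
  rw [ht, twoSqCount_two_pow_mul_odd hβ hα]
  refine ⟨fun h => ?_, fun h => ?_, fun h => ?_⟩ <;> split_ifs <;> omega

theorem stmt_2 (k : ℕ) (hk : 2 ≤ k) (t : ZMod (2 ^ k)) :
    (t = 0 → sumSqCount 2 (2 ^ k) t = 2 ^ k) ∧
    (∀ α β : ℕ, t ≠ 0 → t.val = 2 ^ α * β → Odd β → α < k →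
      ((α < k - 1 ∧ β % 4 = 1 → sumSqCount 2 (2 ^ k) t = 2 ^ (k + 1)) ∧
       (α < k - 1 ∧ β % 4 = 3 → sumSqCount 2 (2 ^ k) t = 0) ∧
       (α = k - 1 → sumSqCount 2 (2 ^ k) t = 2 ^ k))) :=
  stmt_2_general k t
end

section
/- Let p be an odd prime with p ≡ 1 (mod 4), let k ≥ 1 and let t ∈ Z_{p^k}. If t = 0 then N_2(t, p^k) = p^{k−1}(p(k+1) − k). If t ≠ 0, write t = p^α β with p ∤ β and 0 ≤ α < k; then N_2(t, p^k) = (α + 1)(p − 1) p^{k−1}. -/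
theorem aux_sqrt_neg_one (p : ℕ) (hp : p.Prime) (hp4 : p % 4 = 1) :
    ∀ j : ℕ, 1 ≤ j → ∃ a : ℤ, ((p : ℤ)) ^ j ∣ a ^ 2 + 1 := by
  haveI : Fact p.Prime := ⟨hp⟩
  have hp2 : 2 ≤ p := hp.two_le
  intro j hj
  induction j with
  | zero => omega
  | succ j ih =>
    rcases Nat.eq_or_lt_of_le hj with h1 | h1
    · obtain ⟨i, hi⟩ : IsSquare (-1 : ZMod p) :=
        ZMod.exists_sq_eq_neg_one_iff.mpr (by omega)
      refine ⟨(i.val : ℤ), ?_⟩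
      rw [← h1, pow_one, ← ZMod.intCast_zmod_eq_zero_iff_dvd]
      push_cast
      rw [ZMod.natCast_val, ZMod.cast_id]
      rw [sq, ← hi]; ring
    · have hj1 : 1 ≤ j := by omega
      obtain ⟨a, m, hm⟩ := ih hj1
      have hpZ : Prime (p : ℤ) := Nat.prime_iff_prime_int.mp hp
      have hpa : ¬ (p : ℤ) ∣ a := by
        intro hd
        have h2 : (p:ℤ) ∣ a ^ 2 + 1 := dvd_trans (dvd_pow_self _ (by omega : j ≠ 0)) ⟨m, hm⟩
        have h3 : (p:ℤ) ∣ 1 := (dvd_add_right (dvd_pow hd two_ne_zero)).mp h2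
        have := Int.le_of_dvd one_pos h3
        omega
      set u : ZMod p := ((2 * a : ℤ) : ZMod p) with hu
      have hu0 : u ≠ 0 := by
        rw [hu, Ne, ZMod.intCast_zmod_eq_zero_iff_dvd]
        intro hd
        rcases hpZ.dvd_mul.mp hd with h | h
        · have := Int.le_of_dvd (by norm_num) h; omega
        · exact hpa h
      set c : ZMod p := -(m : ZMod p) * u⁻¹ with hc
      have key : (p : ℤ) ∣ m + 2 * a * (c.val : ℤ) := by
        rw [← ZMod.intCast_zmod_eq_zero_iff_dvd]
        have hu' : (2 : ZMod p) * ((a : ℤ) : ZMod p) = u := by rw [hu]; push_cast; ring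
        push_cast
        rw [ZMod.natCast_val, ZMod.cast_id, mul_assoc, ← mul_assoc (2 : ZMod p), hu', hc]
        field_simp
        ring
      obtain ⟨s, hs⟩ := key
      refine ⟨a + (c.val : ℤ) * (p:ℤ) ^ j, ?_⟩
      have expand : (a + (c.val : ℤ) * (p:ℤ)^j)^2 + 1
          = (p:ℤ)^j * (m + 2*a*(c.val : ℤ)) + (c.val : ℤ)^2 * ((p:ℤ)^j * (p:ℤ)^j) := by
        linear_combination hm
      rw [expand]
      refine dvd_add ?_ ?_
      · rw [hs, pow_succ]
        exact mul_dvd_mul_left _ (dvd_mul_right _ _)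
      · exact Dvd.dvd.mul_left (by rw [← pow_add]; exact pow_dvd_pow _ (by omega)) _

theorem aux_count_dvd (n m : ℕ) (hn : n ≠ 0) (hm : m ∣ n) :
    Nat.card {v : ZMod n // m ∣ v.val} = n / m := by
  haveI : NeZero n := ⟨hn⟩
  have hm0 : 0 < m := Nat.pos_of_ne_zero (by rintro rfl; exact hn (Nat.zero_dvd.mp hm))
  have hlt : ∀ j : Fin (n / m), m * (j : ℕ) < n := fun j => by
    calc m * (j : ℕ) < m * (n / m) := mul_lt_mul_of_pos_left j.2 hm0
    _ = n := Nat.mul_div_cancel' hm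
  have e : Fin (n / m) ≃ {v : ZMod n // m ∣ v.val} := by
    refine ⟨fun j => ⟨((m * j : ℕ) : ZMod n), ?_⟩, fun v => ⟨v.1.val / m,
      Nat.div_lt_div_of_lt_of_dvd hm (v.1.val_lt)⟩, ?_, ?_⟩
    · rw [ZMod.val_cast_of_lt (hlt j)]
      exact dvd_mul_right _ _
    · intro j
      ext
      simp only
      rw [ZMod.val_cast_of_lt (hlt j), Nat.mul_div_cancel_left _ hm0]
    · rintro ⟨v, hv⟩
      ext
      simp only
      rw [Nat.mul_div_cancel' hv, ZMod.natCast_val, ZMod.cast_id]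
  rw [← Nat.card_congr e, Nat.card_eq_fintype_card, Fintype.card_fin]

theorem aux_count_fiber (n : ℕ) (hn : n ≠ 0) (u t : ZMod n) :
    Nat.card {v : ZMod n // u * v = t} =
      if Nat.gcd n u.val ∣ t.val then Nat.gcd n u.val else 0 := by
  haveI : NeZero n := ⟨hn⟩
  set d := Nat.gcd n u.val with hd
  by_cases h : d ∣ t.val
  · rw [if_pos h]
    obtain ⟨s, hs⟩ := h
    have hbez : ((d : ℕ) : ZMod n) = u * ((Nat.gcdB n u.val : ℤ) : ZMod n) := by
      have hb := Nat.gcd_eq_gcd_ab n u.val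
      have : ((d : ℕ) : ZMod n) = (((n : ℤ) * Nat.gcdA n u.val + (u.val : ℤ) * Nat.gcdB n u.val : ℤ) : ZMod n) := by
        rw [← hb]; push_cast; ring
      rw [this]
      push_cast
      simp [ZMod.natCast_self, ZMod.natCast_val, ZMod.cast_id]
    set v₀ : ZMod n := ((Nat.gcdB n u.val : ℤ) : ZMod n) * (s : ℕ) with hv0
    have hsol : u * v₀ = t := by
      have ht : ((t.val : ℕ) : ZMod n) = t := by rw [ZMod.natCast_val, ZMod.cast_id]
      rw [hv0, ← mul_assoc, ← hbez, ← Nat.cast_mul, ← hs, ht]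
    have e : {v : ZMod n // u * v = t} ≃ {v : ZMod n // u * v = 0} :=
      { toFun := fun v => ⟨v.1 - v₀, by rw [mul_sub, v.2, hsol, sub_self]⟩
        invFun := fun w => ⟨w.1 + v₀, by rw [mul_add, w.2, hsol, zero_add]⟩
        left_inv := fun v => by ext; simp
        right_inv := fun w => by ext; simp }
    rw [Nat.card_congr e]
    have ho : addOrderOf u = n / d := by
      conv_lhs => rw [show u = ((u.val : ℕ) : ZMod n) by rw [ZMod.natCast_val, ZMod.cast_id]]
      exact ZMod.addOrderOf_coe u.val hn
    have hker : ∀ v : ZMod n, u * v = 0 ↔ (n / d) ∣ v.val := by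
      intro v
      rw [← ho, addOrderOf_dvd_iff_nsmul_eq_zero, nsmul_eq_mul, ZMod.natCast_val,
        ZMod.cast_id, mul_comm]
    rw [Nat.card_congr (Equiv.subtypeEquivRight hker),
      aux_count_dvd n (n / d) hn (Nat.div_dvd_of_dvd (Nat.gcd_dvd_left n u.val)),
      Nat.div_div_self (Nat.gcd_dvd_left n u.val) hn]
  · rw [if_neg h]
    rw [Nat.card_eq_zero]
    left
    refine ⟨fun v => h ?_⟩
    have : t.val = u.val * v.1.val % n := by
      have h3 := congrArg ZMod.val v.2
      rw [ZMod.val_mul] at h3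
      exact h3.symm
    have h2 : d ∣ u.val * v.1.val % n :=
      (Nat.dvd_mod_iff (Nat.gcd_dvd_left n u.val)).mpr
        ((Nat.gcd_dvd_right n u.val).mul_right _)
    rwa [← this] at h2

theorem aux_equiv (n : ℕ) (i v : ZMod n) (hi : i ^ 2 = -1) (hv : 2 * v = 1) (t : ZMod n) :
    Nat.card {x : Fin 2 → ZMod n // ∑ j, (x j) ^ 2 = t}
      = Nat.card {w : ZMod n × ZMod n // w.1 * w.2 = t} := by
  refine Nat.card_congr ?_
  refine (Equiv.subtypeEquivRight (fun x => by rw [Fin.sum_univ_two])).trans ?_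
  refine
    { toFun := fun x => ⟨(x.1 0 + i * x.1 1, x.1 0 - i * x.1 1), by
        have hx := x.2
        dsimp only
        linear_combination hx - (x.1 1) ^ 2 * hi⟩
      invFun := fun w => ⟨![v * (w.1.1 + w.1.2), v * (-i) * (w.1.1 - w.1.2)], by
        have hw := w.2
        simp only [Fin.isValue, Matrix.cons_val_zero, Matrix.cons_val_one, Matrix.head_cons]
        linear_combination (v ^ 2 * (w.1.1 - w.1.2) ^ 2) * hi
          + (w.1.1 * w.1.2 * (2 * v + 1)) * hv + hw⟩
      left_inv := fun x => by
        apply Subtype.ext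
        funext j
        fin_cases j
        · show v * ((x.1 0 + i * x.1 1) + (x.1 0 - i * x.1 1)) = x.1 0
          linear_combination (x.1 0) * hv
        · show v * (-i) * ((x.1 0 + i * x.1 1) - (x.1 0 - i * x.1 1)) = x.1 1
          linear_combination (-2 * v * (x.1 1)) * hi + (x.1 1) * hv
      right_inv := fun w => by
        apply Subtype.ext
        apply Prod.ext
        · simp only [Fin.isValue, Matrix.cons_val_zero, Matrix.cons_val_one, Matrix.head_cons]
          linear_combination (-v * (w.1.1 - w.1.2)) * hi + w.1.1 * hv
        · simp only [Fin.isValue, Matrix.cons_val_zero, Matrix.cons_val_one, Matrix.head_cons]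
          linear_combination (v * (w.1.1 - w.1.2)) * hi + w.1.2 * hv }

/-- the (truncated) p-adic valuation on `ZMod (p^k)` -/
noncomputable def pval (p k : ℕ) (u : ZMod (p ^ k)) : ℕ :=
  if u = 0 then k else (u.val).factorization p

theorem aux_pval (p k : ℕ) (hp : p.Prime) (u : ZMod (p ^ k)) (hu : u ≠ 0) :
    pval p k u < k ∧ p ^ (pval p k u) ∣ u.val ∧ ¬ p ^ (pval p k u + 1) ∣ u.val := by
  haveI : NeZero (p ^ k) := ⟨pow_ne_zero k hp.pos.ne'⟩
  have hv0 : u.val ≠ 0 := fun h => hu ((ZMod.val_eq_zero u).mp h)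
  have hpv : pval p k u = (u.val).factorization p := by simp [pval, hu]
  rw [hpv]
  have hdvd : p ^ (u.val).factorization p ∣ u.val := Nat.ordProj_dvd _ _
  refine ⟨?_, hdvd, ?_⟩
  · by_contra hge
    push_neg at hge
    have h1 : (p : ℕ) ^ k ∣ u.val := dvd_trans (pow_dvd_pow p hge) hdvd
    have h2 := Nat.le_of_dvd (Nat.pos_of_ne_zero hv0) h1
    have := u.val_lt
    omega
  · intro h
    have := (hp.pow_dvd_iff_le_factorization hv0).mp h
    omega

theorem aux_gcd (p k : ℕ) (hp : p.Prime) (u : ZMod (p ^ k)) :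
    Nat.gcd (p ^ k) u.val = p ^ pval p k u := by
  haveI : NeZero (p ^ k) := ⟨pow_ne_zero k hp.pos.ne'⟩
  by_cases hu : u = 0
  · subst hu
    simp [pval, ZMod.val_zero]
  · have hv0 : u.val ≠ 0 := fun h => hu ((ZMod.val_eq_zero u).mp h)
    obtain ⟨hlt, hdvd, hnd⟩ := aux_pval p k hp u hu
    apply Nat.dvd_antisymm
    · obtain ⟨j, hjk, hj⟩ := (Nat.dvd_prime_pow hp).mp (Nat.gcd_dvd_left (p ^ k) u.val)
      rw [hj]
      apply pow_dvd_pow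
      have h1 : p ^ j ∣ u.val := hj ▸ Nat.gcd_dvd_right (p ^ k) u.val
      have h2 := (hp.pow_dvd_iff_le_factorization hv0).mp h1
      have h3 : pval p k u = (u.val).factorization p := by simp [pval, hu]
      omega
    · exact Nat.dvd_gcd (pow_dvd_pow p (le_of_lt hlt)) hdvd

theorem aux_fiber_card (p k : ℕ) (hp : p.Prime) (a : ℕ) (ha : a < k) :
    Nat.card {u : ZMod (p ^ k) // pval p k u = a}
      = p ^ (k - a) - p ^ (k - a - 1) := by
  haveI : NeZero (p ^ k) := ⟨pow_ne_zero k hp.pos.ne'⟩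
  classical
  have hmem : ∀ u : ZMod (p ^ k), pval p k u = a ↔ p ^ a ∣ u.val ∧ ¬ p ^ (a + 1) ∣ u.val := by
    intro u
    by_cases hu : u = 0
    · subst hu
      have h0 : pval p k (0 : ZMod (p ^ k)) = k := by simp [pval]
      simp only [h0, ZMod.val_zero]
      simp [Nat.dvd_zero]
      omega
    · obtain ⟨hlt, hdvd, hnd⟩ := aux_pval p k hp u hu
      constructor
      · rintro rfl
        exact ⟨hdvd, hnd⟩
      · rintro ⟨h1, h2⟩
        have hv0 : u.val ≠ 0 := fun h => hu ((ZMod.val_eq_zero u).mp h)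
        have ha1 := (hp.pow_dvd_iff_le_factorization hv0).mp h1
        have ha2 := (hp.pow_dvd_iff_le_factorization hv0).mp hdvd
        have ha3 : ¬ (a + 1 ≤ (u.val).factorization p) :=
          fun hh => h2 ((hp.pow_dvd_iff_le_factorization hv0).mpr hh)
        have h3 : pval p k u = (u.val).factorization p := by simp [pval, hu]
        omega
  have hsplit : (Finset.univ.filter (fun u : ZMod (p ^ k) => pval p k u = a))
      = (Finset.univ.filter (fun u : ZMod (p ^ k) => p ^ a ∣ u.val))
        \ (Finset.univ.filter (fun u : ZMod (p ^ k) => p ^ (a + 1) ∣ u.val)) := by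
    ext u
    simp [hmem u]
  have hcard : ∀ b : ℕ, b ≤ k →
      Nat.card {u : ZMod (p ^ k) // p ^ b ∣ u.val} = p ^ (k - b) := by
    intro b hb
    rw [aux_count_dvd _ _ (pow_ne_zero k hp.pos.ne') (pow_dvd_pow p hb),
      Nat.pow_div hb hp.pos]
  rw [Nat.card_eq_fintype_card, Fintype.card_subtype, hsplit, Finset.card_sdiff_of_subset
    (by intro u hu'
        simp only [Finset.mem_filter] at *
        exact ⟨hu'.1, dvd_trans (pow_dvd_pow p (Nat.le_succ a)) hu'.2⟩),
    ← Fintype.card_subtype, ← Fintype.card_subtype,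
    ← Nat.card_eq_fintype_card, ← Nat.card_eq_fintype_card,
    hcard a (le_of_lt ha), hcard (a + 1) ha]
  congr 2

theorem stmt_8 (p : ℕ) (hp : p.Prime) (hodd : Odd p) (hp4 : p % 4 = 1)
    (k : ℕ) (hk : 1 ≤ k) (t : ZMod (p ^ k)) :
    (t = 0 → sumSqCount 2 (p ^ k) t = p ^ (k - 1) * (p * (k + 1) - k)) ∧
    (∀ α β : ℕ, t ≠ 0 → t.val = p ^ α * β → ¬ p ∣ β → α < k →
      sumSqCount 2 (p ^ k) t = (α + 1) * (p - 1) * p ^ (k - 1)) := by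
  haveI : Fact p.Prime := ⟨hp⟩
  haveI : NeZero (p ^ k) := ⟨pow_ne_zero k hp.pos.ne'⟩
  classical
  -- square root of -1 mod p^k
  obtain ⟨a, ha⟩ := aux_sqrt_neg_one p hp hp4 k hk
  have hi : ((a : ZMod (p ^ k))) ^ 2 = -1 := by
    have h0 : ((a ^ 2 + 1 : ℤ) : ZMod (p ^ k)) = 0 := by
      rw [ZMod.intCast_zmod_eq_zero_iff_dvd]
      exact_mod_cast ha
    push_cast at h0
    linear_combination h0
  -- inverse of 2
  have h2 : IsUnit (2 : ZMod (p ^ k)) := by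
    rw [show ((2 : ZMod (p ^ k)) = ((2 : ℕ) : ZMod (p ^ k))) by push_cast; ring,
      ZMod.isUnit_iff_coprime]
    refine (Nat.prime_two.coprime_iff_not_dvd).mpr ?_
    intro hdvd
    have := Nat.Prime.dvd_of_dvd_pow Nat.prime_two hdvd
    omega
  have hv : (2 : ZMod (p ^ k)) * (2 : ZMod (p ^ k))⁻¹ = 1 := ZMod.mul_inv_of_unit _ h2
  -- main counting identity
  have key : sumSqCount 2 (p ^ k) t = ∑ b ∈ Finset.range (k + 1),
      Nat.card {u : ZMod (p ^ k) // pval p k u = b} * (if p ^ b ∣ t.val then p ^ b else 0) := by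
    rw [sumSqCount, aux_equiv _ _ _ hi hv t]
    have e : {w : ZMod (p ^ k) × ZMod (p ^ k) // w.1 * w.2 = t}
        ≃ Σ u : ZMod (p ^ k), {v' : ZMod (p ^ k) // u * v' = t} :=
      ⟨fun w => ⟨w.1.1, w.1.2, w.2⟩, fun s => ⟨(s.1, s.2.1), s.2.2⟩,
        fun _ => rfl, fun _ => rfl⟩
    rw [Nat.card_congr e, Nat.card_eq_fintype_card, Fintype.card_sigma]
    have hterm : ∀ u : ZMod (p ^ k), Fintype.card {v' : ZMod (p ^ k) // u * v' = t}
        = if p ^ (pval p k u) ∣ t.val then p ^ (pval p k u) else 0 := fun u => by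
      rw [← Nat.card_eq_fintype_card, aux_count_fiber _ (pow_ne_zero k hp.pos.ne') u t,
        aux_gcd p k hp u]
    rw [Finset.sum_congr rfl (fun u _ => hterm u)]
    have hmaps : ∀ u : ZMod (p ^ k), u ∈ Finset.univ → pval p k u ∈ Finset.range (k + 1) := by
      intro u _
      rw [Finset.mem_range]
      by_cases hu : u = 0
      · simp [pval, hu]
      · exact Nat.lt_succ_of_lt (aux_pval p k hp u hu).1
    rw [← Finset.sum_fiberwise_of_maps_to hmaps
      (fun u => if p ^ pval p k u ∣ t.val then p ^ pval p k u else 0)]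
    refine Finset.sum_congr rfl (fun b _ => ?_)
    have hconst : ∑ u ∈ Finset.filter (fun i => pval p k i = b) Finset.univ,
          (if p ^ pval p k u ∣ t.val then p ^ pval p k u else 0)
        = ∑ _u ∈ Finset.filter (fun i => pval p k i = b) Finset.univ,
          (if p ^ b ∣ t.val then p ^ b else 0) :=
      Finset.sum_congr rfl (fun u hu => by rw [(Finset.mem_filter.mp hu).2])
    rw [hconst, Finset.sum_const, smul_eq_mul]
    congr 1
    rw [Nat.card_eq_fintype_card, Fintype.card_subtype]
  -- the top fiber has exactly one element
  have htop : Nat.card {u : ZMod (p ^ k) // pval p k u = k} = 1 := by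
    have hiff : ∀ u : ZMod (p ^ k), pval p k u = k ↔ u = 0 := by
      intro u
      constructor
      · intro h
        by_contra hu
        exact absurd h (Nat.ne_of_lt (aux_pval p k hp u hu).1)
      · rintro rfl; simp [pval]
    have e0 : {u : ZMod (p ^ k) // u = 0} ≃ PUnit.{1} :=
      ⟨fun _ => PUnit.unit, fun _ => ⟨0, rfl⟩,
        fun x => by rcases x with ⟨u, rfl⟩; rfl, fun _ => rfl⟩
    rw [Nat.card_congr ((Equiv.subtypeEquivRight hiff).trans e0)]
    exact Nat.card_unique
  -- value of the generic fiber term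
  have hgen : ∀ b : ℕ, b < k →
      Nat.card {u : ZMod (p ^ k) // pval p k u = b} * p ^ b = p ^ k - p ^ (k - 1) := by
    intro b hb
    rw [aux_fiber_card p k hp b hb, Nat.sub_mul, ← pow_add, ← pow_add]
    congr 2 <;> omega
  obtain ⟨p', rfl⟩ : ∃ p', p = p' + 1 := ⟨p - 1, by have := hp.pos; omega⟩
  have hq : (p' + 1) ^ k = (p' + 1) ^ (k - 1) * (p' + 1) := by
    rw [← pow_succ]
    congr 1
    omega
  constructor
  · intro ht0
    rw [key]
    have hz : t.val = 0 := by rw [ht0, ZMod.val_zero]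
    have hdvd0 : ∀ b : ℕ, (p' + 1) ^ b ∣ t.val := fun b => by rw [hz]; exact dvd_zero _
    rw [Finset.sum_range_succ, htop, one_mul, if_pos (hdvd0 k)]
    have hsum0 : ∑ b ∈ Finset.range k,
          Nat.card {u : ZMod ((p' + 1) ^ k) // pval (p' + 1) k u = b}
            * (if (p' + 1) ^ b ∣ t.val then (p' + 1) ^ b else 0)
        = ∑ _b ∈ Finset.range k, ((p' + 1) ^ k - (p' + 1) ^ (k - 1)) :=
      Finset.sum_congr rfl (fun b hb => by
        rw [Finset.mem_range] at hb
        rw [if_pos (hdvd0 b), hgen b hb])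
    rw [hsum0, Finset.sum_const, Finset.card_range, smul_eq_mul]
    set q := (p' + 1) ^ (k - 1) with hqdef
    rw [hq]
    have h1 : q * (p' + 1) - q = q * p' := by
      rw [Nat.mul_succ, Nat.add_sub_cancel]
    have h2' : (p' + 1) * (k + 1) - k = p' * (k + 1) + 1 := by
      have : (p' + 1) * (k + 1) = p' * (k + 1) + (k + 1) := by ring
      omega
    rw [h1, h2']
    ring
  · intro α β htne htval hbeta halpha
    rw [key]
    have htv0 : t.val ≠ 0 := fun h0 => htne ((ZMod.val_eq_zero t).mp h0)
    have hb0 : β ≠ 0 := fun h => hbeta (h ▸ dvd_zero _)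
    have hfac : (t.val).factorization (p' + 1) = α := by
      rw [htval, Nat.factorization_mul (pow_ne_zero α hp.pos.ne') hb0]
      simp [hp.factorization_pow, Nat.factorization_eq_zero_of_not_dvd hbeta]
    have hcond : ∀ b : ℕ, ((p' + 1) ^ b ∣ t.val ↔ b ≤ α) := by
      intro b
      constructor
      · intro h
        have := (hp.pow_dvd_iff_le_factorization htv0).mp h
        omega
      · intro h
        exact dvd_trans (pow_dvd_pow _ h) (htval ▸ dvd_mul_right _ β)
    have hstep1 : ∑ b ∈ Finset.range (k + 1),
          Nat.card {u : ZMod ((p' + 1) ^ k) // pval (p' + 1) k u = b}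
            * (if (p' + 1) ^ b ∣ t.val then (p' + 1) ^ b else 0)
        = ∑ b ∈ Finset.range (k + 1),
            (if b ≤ α then (p' + 1) ^ k - (p' + 1) ^ (k - 1) else 0) := by
      refine Finset.sum_congr rfl (fun b hb => ?_)
      rw [Finset.mem_range] at hb
      rw [if_congr (hcond b) rfl rfl, mul_ite, mul_zero]
      by_cases hbα : b ≤ α
      · rw [if_pos hbα, if_pos hbα, hgen b (by omega)]
      · rw [if_neg hbα, if_neg hbα]
    rw [hstep1, ← Finset.sum_filter]
    have hfilter : (Finset.range (k + 1)).filter (· ≤ α) = Finset.range (α + 1) := by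
      ext b
      simp only [Finset.mem_filter, Finset.mem_range]
      omega
    rw [hfilter, Finset.sum_const, Finset.card_range, smul_eq_mul]
    have h3 : (p' + 1) ^ k - (p' + 1) ^ (k - 1) = (p' + 1 - 1) * (p' + 1) ^ (k - 1) := by
      rw [Nat.sub_mul, one_mul, ← pow_succ']
      congr 2
      omega
    rw [h3, ← mul_assoc]
end

section
/- Let p be an odd prime with p ≡ 3 (mod 4), let k ≥ 1 and let t ∈ Z_{p^k}. If t = 0 then N_2(t, p^k) = p^{2⌊k/2⌋}. If t ≠ 0, write t = p^α β with p ∤ β and 0 ≤ α < k; then N_2(t, p^k) = (p + 1) p^{k−1} if α is even, and N_2(t, p^k) = 0 if α is odd. -/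
open Finset

theorem Finset.card_filter_fst_and_snd {α β : Type*} [Fintype α] [Fintype β] (P : α → Prop)
    (Q : β → Prop) [DecidablePred P] [DecidablePred Q] :
    #{w : α × β | P w.1 ∧ Q w.2} = #{a | P a} * #{b | Q b} := by
  rw [← card_product, ← filter_product, univ_product_univ]

theorem AddMonoidHom.card_fiber_mul_card_of_surjective {G H : Type*} [AddGroup G] [Fintype G]
    [AddGroup H] [Fintype H] [DecidableEq H] {f : G →+ H} (hf : Function.Surjective f) (y : H) :
    #{g | f g = y} * Fintype.card H = Fintype.card G := by
  calc #{g | f g = y} * Fintype.card H = ∑ y' : H, #{g | f g = y'} := by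
        rw [sum_congr rfl fun y' _ => card_fiber_eq_of_mem_range f (hf y') (hf y), sum_const,
          card_univ, smul_eq_mul, mul_comm]
    _ = Fintype.card G := by
        rw [← card_eq_sum_card_fiberwise fun g _ => mem_univ (f g), card_univ]

theorem IsCyclic.isSquare_mul_of_not_isSquare {G : Type*} [CommGroup G] [IsCyclic G] [Finite G]
    (hG : Even (Nat.card G)) {a b : G} (ha : ¬IsSquare a) (hb : ¬IsSquare b) :
    IsSquare (a * b) := by
  have hsq : ∀ x : G, IsSquare x ↔ x ∈ (powMonoidHom 2 : G →* G).range := fun x => by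
    simp [IsSquare, sq, eq_comm]
  have hindex : (powMonoidHom 2 : G →* G).range.index = 2 := by
    rw [IsCyclic.index_powMonoidHom_range, Nat.gcd_eq_right (even_iff_two_dvd.mp hG)]
  simp only [hsq, Subgroup.mul_mem_iff_of_index_two hindex] at *
  tauto

section SumTwoSq

variable {R : Type*} [CommRing R] [Fintype R] [DecidableEq R]

def sumTwoSqCount (t : R) : ℕ := #{z : R × R | z.1 ^ 2 + z.2 ^ 2 = t}

theorem sumTwoSqCount_mul_sq_add_sq {a b : R} (hab : IsUnit (a ^ 2 + b ^ 2)) (t : R) :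
    sumTwoSqCount ((a ^ 2 + b ^ 2) * t) = sumTwoSqCount t := by
  obtain ⟨w, hw⟩ := hab.exists_left_inv
  refine card_nbij' (fun z => (w * (a * z.1 + b * z.2), w * (a * z.2 - b * z.1)))
    (fun z => (a * z.1 - b * z.2, b * z.1 + a * z.2)) ?_ ?_ ?_ ?_ <;>
    intro z hz <;> simp only [coe_filter, mem_univ, true_and, Set.mem_ofPred_eq] at hz ⊢
  · linear_combination w ^ 2 * (a ^ 2 + b ^ 2) * hz + (w * (a ^ 2 + b ^ 2) + 1) * t * hw
  · linear_combination (a ^ 2 + b ^ 2) * hz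
  · ext
    · linear_combination z.1 * hw
    · linear_combination z.2 * hw
  · ext
    · linear_combination z.1 * hw
    · linear_combination z.2 * hw

end SumTwoSq

theorem sumSqCount_two_eq_sumTwoSqCount (n : ℕ) [NeZero n] (t : ZMod n) :
    sumSqCount 2 n t = sumTwoSqCount t := by
  have e : {x : Fin 2 → ZMod n // ∑ i, x i ^ 2 = t} ≃
      {z : ZMod n × ZMod n // z.1 ^ 2 + z.2 ^ 2 = t} :=
    (finTwoArrowEquiv _).subtypeEquiv fun x => by simp [Fin.sum_univ_two]
  rw [sumSqCount, Nat.card_congr e, Nat.card_eq_fintype_card, Fintype.card_subtype,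
    sumTwoSqCount]

namespace ZMod

theorem castHom_eq_natCast_val {m n : ℕ} [NeZero n] (h : m ∣ n) (x : ZMod n) :
    castHom h (ZMod m) x = (x.val : ZMod m) := by
  rw [castHom_apply, cast_eq_val]

theorem card_filter_castHom_eq_mul_s9 {m n : ℕ} [NeZero n] (h : m ∣ n) (c : ZMod m) :
    #{x : ZMod n | castHom h (ZMod m) x = c} * m = n := by
  have : NeZero m := ⟨fun hm => NeZero.ne n (Nat.eq_zero_of_zero_dvd (hm ▸ h))⟩
  have := AddMonoidHom.card_fiber_mul_card_of_surjective
    (f := (castHom h (ZMod m)).toAddMonoidHom) (ringHom_surjective _) c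
  rwa [card, card] at this

theorem natCast_mul_eq_zero_iff_castHom_s9 {d m n : ℕ} [NeZero n] (hn : d * m = n) (x : ZMod n) :
    (d : ZMod n) * x = 0 ↔ castHom (Dvd.intro_left d hn) (ZMod m) x = 0 := by
  subst hn
  have hd : 0 < d := Nat.pos_of_ne_zero fun hd => NeZero.ne (d * m) (by rw [hd, zero_mul])
  rw [castHom_eq_natCast_val, natCast_eq_zero_iff]
  conv_lhs => rw [← natCast_zmod_val x, ← Nat.cast_mul, natCast_eq_zero_iff]
  exact Nat.mul_dvd_mul_iff_left hd

theorem exists_eq_mul_of_castHom_eq_zero {m n : ℕ} [NeZero n] (h : m ∣ n) {x : ZMod n}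
    (hx : castHom h (ZMod m) x = 0) : ∃ a : ZMod n, x = m * a := by
  rw [castHom_eq_natCast_val, natCast_eq_zero_iff] at hx
  obtain ⟨a, ha⟩ := hx
  exact ⟨a, by rw [← natCast_zmod_val x, ha, Nat.cast_mul]⟩

theorem card_filter_natCast_mul_eq_zero {d m n : ℕ} [NeZero n] (hn : d * m = n) :
    #{x : ZMod n | (d : ZMod n) * x = 0} = d := by
  have hm : 0 < m := Nat.pos_of_ne_zero fun hm => NeZero.ne n (by rw [← hn, hm, mul_zero])
  rw [filter_congr fun x _ => natCast_mul_eq_zero_iff_castHom_s9 hn x]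
  exact Nat.eq_of_mul_eq_mul_right hm (by rw [card_filter_castHom_eq_mul_s9, hn])

variable {p k : ℕ} [Fact p.Prime]

theorem isUnit_iff_castHom_ne_zero (hk : k ≠ 0) (x : ZMod (p ^ k)) :
    IsUnit x ↔ castHom (dvd_pow_self p hk) (ZMod p) x ≠ 0 := by
  rw [castHom_eq_natCast_val, Ne, natCast_eq_zero_iff,
    ← (Fact.out : p.Prime).coprime_iff_not_dvd, Nat.coprime_comm,
    ← Nat.coprime_pow_right_iff (Nat.pos_of_ne_zero hk)]
  conv_lhs => rw [← natCast_zmod_val x]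
  exact isUnit_iff_coprime _ _

theorem exists_eq_mul_of_not_isUnit (hk : k ≠ 0) {x : ZMod (p ^ k)} (hx : ¬IsUnit x) :
    ∃ a : ZMod (p ^ k), x = p * a :=
  exists_eq_mul_of_castHom_eq_zero _ (by rwa [isUnit_iff_castHom_ne_zero hk, not_not] at hx)

theorem not_isUnit_natCast_mul (hk : k ≠ 0) (x : ZMod (p ^ k)) :
    ¬IsUnit ((p : ZMod (p ^ k)) * x) := by
  rw [isUnit_iff_castHom_ne_zero hk, map_mul, map_natCast, natCast_self, zero_mul, not_not]

theorem card_filter_not_isUnit (hk : k ≠ 0) : #{x : ZMod (p ^ k) | ¬IsUnit x} = p ^ (k - 1) := by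
  rw [filter_congr fun x _ => by rw [isUnit_iff_castHom_ne_zero hk, not_not]]
  refine Nat.eq_of_mul_eq_mul_right (Fact.out : p.Prime).pos ?_
  rw [card_filter_castHom_eq_mul_s9, ← pow_succ, Nat.sub_add_cancel (Nat.pos_of_ne_zero hk)]

theorem card_filter_natCast_mul_prod_eq (hk : k ≠ 0) {z : ZMod (p ^ k) × ZMod (p ^ k)}
    (h₁ : ¬IsUnit z.1) (h₂ : ¬IsUnit z.2) :
    #{w : ZMod (p ^ k) × ZMod (p ^ k) | ((p : ZMod (p ^ k)) * w.1, (p : ZMod (p ^ k)) * w.2) = z} =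
      p * p := by
  obtain ⟨a, ha⟩ := exists_eq_mul_of_not_isUnit hk h₁
  obtain ⟨b, hb⟩ := exists_eq_mul_of_not_isUnit hk h₂
  set mulP := AddMonoidHom.mulLeft (p : ZMod (p ^ k))
  have h := AddMonoidHom.card_fiber_eq_of_mem_range (mulP.prodMap mulP)
    ⟨(a, b), Prod.ext ha.symm hb.symm⟩ ⟨0, map_zero _⟩
  simp only [mulP, AddMonoidHom.coe_prodMap, AddMonoidHom.coe_mulLeft, Prod.map] at h
  refine h.trans ?_
  simp only [Prod.ext_iff, Prod.fst_zero, Prod.snd_zero]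
  rw [card_filter_fst_and_snd ((p : ZMod (p ^ k)) * · = 0) ((p : ZMod (p ^ k)) * · = 0),
    card_filter_natCast_mul_eq_zero (mul_pow_sub_one hk p)]

theorem exists_sq_add_sq_eq_of_isUnit (hp2 : p ≠ 2) (hk : k ≠ 0) {u : ZMod (p ^ k)}
    (hu : IsUnit u) : ∃ a b : ZMod (p ^ k), a ^ 2 + b ^ 2 = u := by
  have hp : p.Prime := Fact.out
  by_cases hsq : IsSquare u
  · obtain ⟨s, rfl⟩ := hsq
    exact ⟨s, 0, by ring⟩
  set π := castHom (dvd_pow_self p hk) (ZMod p)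
  -- a non-square modulo `p` that is a sum of two squares lifts to a non-square unit
  obtain ⟨c, hc⟩ :=
    FiniteField.exists_nonsquare (by rwa [ringChar_zmod_n] : ringChar (ZMod p) ≠ 2)
  obtain ⟨a, b, hab⟩ := sq_add_sq p c
  obtain ⟨A, rfl⟩ := ringHom_surjective π a
  obtain ⟨B, rfl⟩ := ringHom_surjective π b
  have hAB : π (A ^ 2 + B ^ 2) = c := by rw [map_add, map_pow, map_pow, hab]
  have hv : IsUnit (A ^ 2 + B ^ 2) := by
    rw [isUnit_iff_castHom_ne_zero hk, hAB]
    rintro rfl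
    exact hc ⟨0, by ring⟩
  have hvsq : ¬IsSquare (A ^ 2 + B ^ 2) := fun h => hc (hAB ▸ h.map π)
  have := isCyclic_units_of_prime_pow p hp hp2 k
  have heven : Even (Nat.card (ZMod (p ^ k))ˣ) := by
    rw [Nat.card_eq_fintype_card, card_units_eq_totient]
    exact Nat.totient_even ((show 2 < p by have := hp.two_le; omega).trans_le
      (Nat.le_self_pow hk p))
  obtain ⟨s, hs⟩ := IsCyclic.isSquare_mul_of_not_isSquare heven (a := hu.unit) (b := hv.unit)
    (fun h => hsq (by simpa using h.map (Units.coeHom _)))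
    (fun h => hvsq (by simpa using h.map (Units.coeHom _)))
  have hs' : u * (A ^ 2 + B ^ 2) = s * s := by simpa using congrArg Units.val hs
  obtain ⟨w, hw⟩ := hv.exists_left_inv
  exact ⟨A * (w * s), B * (w * s), by
    linear_combination (-(w ^ 2 * (A ^ 2 + B ^ 2))) * hs' + u * (w * (A ^ 2 + B ^ 2) + 1) * hw⟩

theorem sq_add_sq_eq_zero_iff (hp4 : p % 4 = 3) {x y : ZMod p} :
    x ^ 2 + y ^ 2 = 0 ↔ x = 0 ∧ y = 0 := by
  refine ⟨fun h => ?_, fun ⟨hx, hy⟩ => by rw [hx, hy]; ring⟩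
  have hy : y = 0 := by
    by_contra hy
    refine exists_sq_eq_neg_one_iff.mp ⟨x * y⁻¹, ?_⟩ hp4
    linear_combination (-y⁻¹ ^ 2) * h + (y * y⁻¹ + 1) * mul_inv_cancel₀ hy
  subst hy
  exact ⟨pow_eq_zero_iff two_ne_zero |>.mp (by simpa using h), rfl⟩

theorem isUnit_sq_add_sq_iff (hp4 : p % 4 = 3) (hk : k ≠ 0) {x y : ZMod (p ^ k)} :
    IsUnit (x ^ 2 + y ^ 2) ↔ IsUnit x ∨ IsUnit y := by
  simp only [isUnit_iff_castHom_ne_zero hk, map_add, map_pow, Ne, sq_add_sq_eq_zero_iff hp4,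
    not_and_or]

end ZMod

theorem card_filter_castHom_sq_add_sq_eq {m n : ℕ} [NeZero m] [NeZero n] (h : m ∣ n)
    (c : ZMod m) :
    #{w : ZMod n × ZMod n |
        ZMod.castHom h (ZMod m) w.1 ^ 2 + ZMod.castHom h (ZMod m) w.2 ^ 2 = c} * (m * m) =
      sumTwoSqCount c * (n * n) := by
  set π := ZMod.castHom h (ZMod m)
  have hfiber : ∀ y : ZMod m × ZMod m, #{w : ZMod n × ZMod n | (π w.1, π w.2) = y} * (m * m) =
      n * n := fun y => by
    simp only [Prod.ext_iff]
    rw [card_filter_fst_and_snd (π · = y.1) (π · = y.2), mul_mul_mul_comm,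
      ZMod.card_filter_castHom_eq_mul_s9, ZMod.card_filter_castHom_eq_mul_s9]
  have h := sum_card_fiberwise_eq_card_filter univ {y : ZMod m × ZMod m | y.1 ^ 2 + y.2 ^ 2 = c}
    fun w : ZMod n × ZMod n => (π w.1, π w.2)
  simp only [mem_filter, mem_univ, true_and] at h
  rw [← h, sum_mul, sum_congr rfl fun y _ => hfiber y, sum_const, smul_eq_mul]
  rfl

section PrimePow

open ZMod

variable {p k : ℕ} [Fact p.Prime]

theorem sumTwoSqCount_eq_of_isUnit (hp2 : p ≠ 2) (hk : k ≠ 0) {t u : ZMod (p ^ k)}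
    (ht : IsUnit t) (hu : IsUnit u) : sumTwoSqCount u = sumTwoSqCount t := by
  obtain ⟨w, hw⟩ := ht.exists_left_inv
  have hwu : IsUnit (u * w) := hu.mul (IsUnit.of_mul_eq_one t hw)
  obtain ⟨a, b, hab⟩ := exists_sq_add_sq_eq_of_isUnit hp2 hk hwu
  have hu' : u = (a ^ 2 + b ^ 2) * t := by rw [hab, mul_assoc, hw, mul_one]
  rw [hu', sumTwoSqCount_mul_sq_add_sq (hab ▸ hwu)]

theorem sumTwoSqCount_of_isUnit (hp4 : p % 4 = 3) (hk : k ≠ 0) {t : ZMod (p ^ k)}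
    (ht : IsUnit t) : sumTwoSqCount t = (p + 1) * p ^ (k - 1) := by
  set U := #{u : ZMod (p ^ k) | IsUnit u}
  have hU : U + p ^ (k - 1) = p ^ k := by
    rw [← card_filter_not_isUnit hk, card_filter_add_card_filter_not, card_univ, ZMod.card]
  have hunit : #{z : ZMod (p ^ k) × ZMod (p ^ k) | IsUnit (z.1 ^ 2 + z.2 ^ 2)} =
      U * sumTwoSqCount t := by
    have h := sum_card_fiberwise_eq_card_filter univ {u : ZMod (p ^ k) | IsUnit u}
      fun z : ZMod (p ^ k) × ZMod (p ^ k) => z.1 ^ 2 + z.2 ^ 2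
    simp only [mem_filter, mem_univ, true_and] at h
    rw [← h]
    calc _ = ∑ _u with IsUnit _u, sumTwoSqCount t := sum_congr rfl fun u hu =>
          sumTwoSqCount_eq_of_isUnit (by omega) hk ht (mem_filter.mp hu).2
      _ = U * sumTwoSqCount t := by rw [sum_const, smul_eq_mul]
  have hnonunit : #{z : ZMod (p ^ k) × ZMod (p ^ k) | ¬IsUnit (z.1 ^ 2 + z.2 ^ 2)} =
      p ^ (k - 1) * p ^ (k - 1) := by
    simp only [isUnit_sq_add_sq_iff hp4 hk, not_or]
    rw [card_filter_fst_and_snd (¬IsUnit ·) (¬IsUnit ·), card_filter_not_isUnit hk]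
  have hpairs : U * sumTwoSqCount t + p ^ (k - 1) * p ^ (k - 1) = p ^ k * p ^ k := by
    rw [← hunit, ← hnonunit, card_filter_add_card_filter_not, card_univ,
      Fintype.card_prod, ZMod.card]
  have hUpos : 0 < U := card_pos.mpr ⟨t, mem_filter.mpr ⟨mem_univ _, ht⟩⟩
  obtain ⟨j, rfl⟩ := Nat.exists_eq_add_one_of_ne_zero hk
  refine Nat.eq_of_mul_eq_mul_left hUpos ?_
  rw [Nat.add_sub_cancel] at hU hpairs ⊢
  zify at hU hpairs ⊢
  linear_combination hpairs - ((p : ℤ) + 1) * p ^ j * hU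

theorem sumTwoSqCount_natCast_sq_mul (hp4 : p % 4 = 3) (t : ZMod (p ^ (k + 2))) :
    sumTwoSqCount ((p : ZMod (p ^ (k + 2))) ^ 2 * t) =
      p ^ 2 * sumTwoSqCount (castHom (pow_dvd_pow p (k.le_add_right 2)) (ZMod (p ^ k)) t) := by
  have hp : p.Prime := Fact.out
  -- count the pairs `w` with `(p w.1, p w.2)` a solution in two ways: each solution has `p ^ 2`
  -- such preimages, and the condition only depends on `w` modulo `p ^ k`
  set π := castHom (pow_dvd_pow p (k.le_add_right 2)) (ZMod (p ^ k))
  set sols := ({z | z.1 ^ 2 + z.2 ^ 2 = (p : ZMod (p ^ (k + 2))) ^ 2 * t} :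
    Finset (ZMod (p ^ (k + 2)) × ZMod (p ^ (k + 2))))
  have hnu : ¬IsUnit ((p : ZMod (p ^ (k + 2))) ^ 2 * t) := by
    rw [sq, mul_assoc]
    exact not_isUnit_natCast_mul (by omega) _
  have hscaled : #{w : ZMod (p ^ (k + 2)) × ZMod (p ^ (k + 2)) | (p * w.1, p * w.2) ∈ sols} =
      sumTwoSqCount ((p : ZMod (p ^ (k + 2))) ^ 2 * t) * (p * p) := by
    rw [← sum_card_fiberwise_eq_card_filter univ sols
      fun w : ZMod (p ^ (k + 2)) × ZMod (p ^ (k + 2)) => (p * w.1, p * w.2),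
      sum_const_nat fun z hz => ?_]
    · rfl
    rw [← (mem_filter.mp hz).2, isUnit_sq_add_sq_iff hp4 (by omega), not_or] at hnu
    exact card_filter_natCast_mul_prod_eq (by omega) hnu.1 hnu.2
  have hreduced : #{w : ZMod (p ^ (k + 2)) × ZMod (p ^ (k + 2)) | (p * w.1, p * w.2) ∈ sols} =
      #{w : ZMod (p ^ (k + 2)) × ZMod (p ^ (k + 2)) | π w.1 ^ 2 + π w.2 ^ 2 = π t} := by
    refine congrArg card (filter_congr fun w _ => ?_)
    rw [mem_filter, ← map_pow, ← map_pow, ← map_add, ← sub_eq_zero (a := π _), ← map_sub,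
      ← natCast_mul_eq_zero_iff_castHom_s9 (by ring : p ^ 2 * p ^ k = p ^ (k + 2))]
    simp only [mem_univ, true_and, Nat.cast_pow]
    constructor <;> intro h <;> linear_combination h
  have h := card_filter_castHom_sq_add_sq_eq (pow_dvd_pow p (k.le_add_right 2)) (π t)
  rw [← hreduced, hscaled] at h
  have := hp.pos
  refine Nat.eq_of_mul_eq_mul_right (by positivity : 0 < p * p * (p ^ k * p ^ k)) ?_
  rw [← mul_assoc, h]
  ring

theorem sumTwoSqCount_natCast_mul_eq_zero (hp4 : p % 4 = 3) {β : ℕ} (hβ : ¬p ∣ β) :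
    sumTwoSqCount ((p * β : ℕ) : ZMod (p ^ (k + 2))) = 0 := by
  have hp : p.Prime := Fact.out
  refine card_eq_zero.mpr (filter_eq_empty_iff.mpr fun z _ hz => hβ ?_)
  have hnu : ¬IsUnit ((p * β : ℕ) : ZMod (p ^ (k + 2))) := by
    rw [Nat.cast_mul]
    exact not_isUnit_natCast_mul (by omega) _
  rw [← hz, isUnit_sq_add_sq_iff hp4 (by omega), not_or] at hnu
  obtain ⟨a, ha⟩ := exists_eq_mul_of_not_isUnit (by omega) hnu.1
  obtain ⟨b, hb⟩ := exists_eq_mul_of_not_isUnit (by omega) hnu.2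
  -- modulo `p ^ 2` the sum `(p a) ^ 2 + (p b) ^ 2` vanishes, while `p β` does not
  set ρ := castHom (pow_dvd_pow p (by omega : 2 ≤ k + 2)) (ZMod (p ^ 2))
  have h := congrArg ρ hz
  rw [ha, hb] at h
  simp only [map_add, map_pow, map_mul, map_natCast] at h
  have hp2 : (p : ZMod (p ^ 2)) ^ 2 = 0 := by exact_mod_cast natCast_self (p ^ 2)
  have h' : ((p * β : ℕ) : ZMod (p ^ 2)) = 0 := by
    rw [← h]
    linear_combination (ρ a ^ 2 + ρ b ^ 2) * hp2
  rw [natCast_eq_zero_iff, sq] at h'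
  exact Nat.dvd_of_mul_dvd_mul_left hp.pos h'

theorem sumTwoSqCount_zero (hp4 : p % 4 = 3) :
    ∀ k, sumTwoSqCount (0 : ZMod (p ^ k)) = p ^ (2 * (k / 2))
  | 0 => by
    have : Subsingleton (ZMod (p ^ 0)) := by rw [pow_zero]; infer_instance
    rw [sumTwoSqCount, filter_true_of_mem fun z _ => Subsingleton.elim _ _, card_univ,
      Fintype.card_prod, ZMod.card, pow_zero, mul_one]
  | 1 => by
    have : CharP (ZMod p) (p ^ 1) := by rw [pow_one]; infer_instance
    have hinj := castHom_injective (n := p ^ 1) (ZMod p)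
    have key : ∀ x y : ZMod (p ^ 1), x ^ 2 + y ^ 2 = 0 ↔ x = 0 ∧ y = 0 := fun x y => by
      rw [← map_eq_zero_iff _ hinj, map_add, map_pow, map_pow, sq_add_sq_eq_zero_iff hp4,
        map_eq_zero_iff _ hinj, map_eq_zero_iff _ hinj]
    rw [show 2 * (1 / 2) = 0 from rfl, pow_zero, sumTwoSqCount, card_eq_one]
    exact ⟨0, by ext z; simp [key, Prod.ext_iff]⟩
  | k + 2 => by
    rw [← mul_zero ((p : ZMod (p ^ (k + 2))) ^ 2), sumTwoSqCount_natCast_sq_mul hp4, map_zero,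
      sumTwoSqCount_zero hp4 k, ← pow_add]
    congr 1
    omega

theorem sumTwoSqCount_natCast_pow_mul (hp4 : p % 4 = 3) {β : ℕ} (hβ : ¬p ∣ β) :
    ∀ {α k : ℕ}, α < k → sumTwoSqCount ((p ^ α * β : ℕ) : ZMod (p ^ k)) =
      if Even α then (p + 1) * p ^ (k - 1) else 0
  | 0, k, hk => by
    rw [if_pos Even.zero, pow_zero, one_mul]
    refine sumTwoSqCount_of_isUnit hp4 (by omega)
      ((isUnit_iff_castHom_ne_zero (by omega) _).mpr ?_)
    rwa [map_natCast, Ne, natCast_eq_zero_iff]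
  | 1, k + 2, _ => by
    rw [if_neg (by decide), pow_one]
    exact sumTwoSqCount_natCast_mul_eq_zero hp4 hβ
  | α + 2, k + 2, hα => by
    have h := sumTwoSqCount_natCast_sq_mul hp4 ((p ^ α * β : ℕ) : ZMod (p ^ (k + 2)))
    rw [map_natCast, sumTwoSqCount_natCast_pow_mul hp4 hβ (by omega : α < k)] at h
    rw [show ((p ^ (α + 2) * β : ℕ) : ZMod (p ^ (k + 2))) =
        (p : ZMod (p ^ (k + 2))) ^ 2 * ((p ^ α * β : ℕ) : ZMod (p ^ (k + 2))) by
      push_cast; ring, h]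
    simp only [Nat.even_add, even_two, iff_true]
    split_ifs
    · rw [mul_left_comm, ← pow_add]
      congr 2
      omega
    · rw [mul_zero]
  | _ + 1, 0, h => absurd h (Nat.not_lt_zero _)
  | _ + 2, 1, h => absurd h (by omega)

end PrimePow

theorem stmt_9_general (p : ℕ) (hp : p.Prime) (hp4 : p % 4 = 3)
    (k : ℕ) (t : ZMod (p ^ k)) :
    (t = 0 → sumSqCount 2 (p ^ k) t = p ^ (2 * (k / 2))) ∧
    (∀ α β : ℕ, t ≠ 0 → t.val = p ^ α * β → ¬ p ∣ β → α < k →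
      ((Even α → sumSqCount 2 (p ^ k) t = (p + 1) * p ^ (k - 1)) ∧
       (Odd α → sumSqCount 2 (p ^ k) t = 0))) := by
  have := Fact.mk hp
  simp only [sumSqCount_two_eq_sumTwoSqCount]
  refine ⟨fun ht => ht ▸ sumTwoSqCount_zero hp4 k, fun α β _ htv hβ hα => ?_⟩
  rw [← ZMod.natCast_zmod_val t, htv, sumTwoSqCount_natCast_pow_mul hp4 hβ hα]
  exact ⟨fun h => if_pos h, fun h => if_neg (Nat.not_even_iff_odd.mpr h)⟩

theorem stmt_9 (p : ℕ) (hp : p.Prime) (hodd : Odd p) (hp4 : p % 4 = 3)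
    (k : ℕ) (hk : 1 ≤ k) (t : ZMod (p ^ k)) :
    (t = 0 → sumSqCount 2 (p ^ k) t = p ^ (2 * (k / 2))) ∧
    (∀ α β : ℕ, t ≠ 0 → t.val = p ^ α * β → ¬ p ∣ β → α < k →
      ((Even α → sumSqCount 2 (p ^ k) t = (p + 1) * p ^ (k - 1)) ∧
       (Odd α → sumSqCount 2 (p ^ k) t = 0))) :=
  stmt_9_general p hp hp4 k t
end

section
/- For every k ≥ 1, the number of triples (x, y, z) ∈ (Z_{2^k})^3 with x^2 + y^2 + z^2 = 0 in Z_{2^k} equals 2^{3k/2} if k is even and 2^{(3k+1)/2} if k is odd. -/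
/-!
Let N(m) count the zeros of x² + y² + z² mod m. Squares mod 4 are 0 or 1, so every zero mod 4n
has even coordinates. Writing them as 2u, 2v, 2w with u, v, w mod 2n, the condition becomes
u² + v² + w² ≡ 0 mod n, which depends only on the residues mod n, each of which has exactly two
lifts mod 2n. Hence N(4n) = 8 N(n), and N(1) = 1, N(2) = 8 give N(2^k) = 2^⌈3k/2⌉.
-/

open Function

theorem AddMonoidHom.card_preimage_of_surjective {G H : Type*} [AddGroup G] [AddGroup H]
    (f : G →+ H) (hf : Surjective f) (s : Set H) :
    Nat.card (f ⁻¹' s) = Nat.card f.ker * Nat.card s := by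
  let e := QuotientAddGroup.quotientKerEquivOfSurjective f hf
  have hpre : f ⁻¹' s = QuotientAddGroup.mk ⁻¹' (e ⁻¹' s) := rfl
  rw [hpre, Nat.card_congr (QuotientAddGroup.preimageMkEquivAddSubgroupProdSet _ _), Nat.card_prod,
    Nat.card_preimage_of_injective e.injective (by simp [e.surjective.range_eq])]

def tripleMap {α β : Type*} (f : α → β) : α × α × α → β × β × β := Prod.map f (Prod.map f f)

def sumSq {R : Type*} [Semiring R] (v : R × R × R) : R := v.1 ^ 2 + v.2.1 ^ 2 + v.2.2 ^ 2

lemma map_sumSq {R S : Type*} [Semiring R] [Semiring S] (f : R →+* S) (v : R × R × R) :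
    sumSq (tripleMap f v) = f (sumSq v) := by
  simp [sumSq, tripleMap]

lemma sumSq_natCast_eq_zero_iff (n a b c : ℕ) :
    sumSq ((a : ZMod n), (b : ZMod n), (c : ZMod n)) = 0 ↔ n ∣ a ^ 2 + b ^ 2 + c ^ 2 := by
  rw [← ZMod.natCast_eq_zero_iff]
  simp [sumSq]

lemma two_dvd_val_of_sumSq_eq_zero_zmod_four :
    ∀ v : ZMod 4 × ZMod 4 × ZMod 4, sumSq v = 0 →
      2 ∣ v.1.val ∧ 2 ∣ v.2.1.val ∧ 2 ∣ v.2.2.val := by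
  unfold sumSq
  decide

lemma two_dvd_val_of_sumSq_eq_zero {m : ℕ} [NeZero m] (hm : 4 ∣ m) (v : ZMod m × ZMod m × ZMod m)
    (h : sumSq v = 0) : 2 ∣ v.1.val ∧ 2 ∣ v.2.1.val ∧ 2 ∣ v.2.2.val := by
  let π := ZMod.castHom hm (ZMod 4)
  have h4 := two_dvd_val_of_sumSq_eq_zero_zmod_four _ (by rw [map_sumSq π, h, map_zero])
  simpa only [tripleMap, Prod.map, π, ZMod.castHom_apply, ZMod.cast_eq_val, ZMod.val_natCast,
    Nat.dvd_mod_iff (show 2 ∣ 4 by norm_num)] using h4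

namespace ZMod

def double (n : ℕ) (u : ZMod (2 * n)) : ZMod (4 * n) := ((2 * u.val : ℕ) : ZMod (4 * n))

section

variable (n : ℕ) [NeZero n]

lemma val_double (u : ZMod (2 * n)) : (double n u).val = 2 * u.val := by
  rw [double, val_natCast, Nat.mod_eq_of_lt]
  have := u.val_lt
  omega

lemma double_injective : Injective (double n) := fun u w h => by
  have := congrArg val h
  rw [val_double, val_double] at this
  exact val_injective _ (by omega)

lemma mem_range_double {x : ZMod (4 * n)} (hx : 2 ∣ x.val) : x ∈ Set.range (double n) := by
  refine ⟨(x.val / 2 : ℕ), val_injective _ ?_⟩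
  have := x.val_lt
  rw [val_double, val_natCast, Nat.mod_eq_of_lt (by omega)]
  omega

lemma setOf_sumSq_eq_zero_subset_range_double :
    {v : ZMod (4 * n) × ZMod (4 * n) × ZMod (4 * n) | sumSq v = 0} ⊆
      Set.range (tripleMap (double n)) := by
  intro v hv
  obtain ⟨h₁, h₂, h₃⟩ := two_dvd_val_of_sumSq_eq_zero (dvd_mul_right 4 n) v hv
  obtain ⟨a, ha⟩ := mem_range_double n h₁
  obtain ⟨b, hb⟩ := mem_range_double n h₂
  obtain ⟨c, hc⟩ := mem_range_double n h₃
  exact ⟨(a, b, c), by simp [tripleMap, ha, hb, hc]⟩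

lemma sumSq_double_eq_zero_iff (u : ZMod (2 * n) × ZMod (2 * n) × ZMod (2 * n)) :
    sumSq (tripleMap (double n) u) = 0 ↔
      sumSq (tripleMap (castHom (dvd_mul_left n 2) (ZMod n)) u) = 0 := by
  simp only [tripleMap, Prod.map, double, castHom_apply, cast_eq_val, sumSq_natCast_eq_zero_iff]
  have four_mul (a b c : ℕ) :
      (2 * a) ^ 2 + (2 * b) ^ 2 + (2 * c) ^ 2 = 4 * (a ^ 2 + b ^ 2 + c ^ 2) := by ring
  rw [four_mul, Nat.mul_dvd_mul_iff_left (by norm_num)]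

end

end ZMod

theorem card_sumSq_eq_zero_four_mul (n : ℕ) [NeZero n] :
    Nat.card {v : ZMod (4 * n) × ZMod (4 * n) × ZMod (4 * n) // sumSq v = 0} =
      8 * Nat.card {v : ZMod n × ZMod n × ZMod n // sumSq v = 0} := by
  let π := ZMod.castHom (dvd_mul_left n 2) (ZMod n)
  let π3 := (π.prodMap (π.prodMap π)).toAddMonoidHom
  have hπ : Surjective π := ZMod.castHom_surjective _
  have hπ3 : Surjective π3 := hπ.prodMap (hπ.prodMap hπ)
  have hker : Nat.card π3.ker = 8 := by
    have h := π3.card_preimage_of_surjective hπ3 Set.univ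
    simp only [Set.preimage_univ, Nat.card_univ, Nat.card_prod, Nat.card_zmod] at h
    have hn := NeZero.pos n
    exact Nat.eq_of_mul_eq_mul_right (by positivity) (h.symm.trans (by ring))
  have hD : Injective (tripleMap (ZMod.double n)) :=
    (ZMod.double_injective n).prodMap ((ZMod.double_injective n).prodMap (ZMod.double_injective n))
  have hpre : tripleMap (ZMod.double n) ⁻¹' {v | sumSq v = 0} = π3 ⁻¹' {w | sumSq w = 0} :=
    Set.ext (ZMod.sumSq_double_eq_zero_iff n)
  change Nat.card ({v | sumSq v = 0} : Set _) = _
  rw [← Nat.card_preimage_of_injective hD (ZMod.setOf_sumSq_eq_zero_subset_range_double n), hpre,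
    π3.card_preimage_of_surjective hπ3, hker]
  rfl

theorem card_sumSq_eq_zero_two_pow : ∀ k : ℕ,
    Nat.card {v : ZMod (2 ^ k) × ZMod (2 ^ k) × ZMod (2 ^ k) // sumSq v = 0} =
      2 ^ ((3 * k + 1) / 2)
  | 0 => by rw [Nat.card_eq_fintype_card]; decide
  | 1 => by rw [Nat.card_eq_fintype_card]; decide
  | k + 2 => by
    rw [show 2 ^ (k + 2) = 4 * 2 ^ k by ring, card_sumSq_eq_zero_four_mul,
      card_sumSq_eq_zero_two_pow k, show (3 * (k + 2) + 1) / 2 = (3 * k + 1) / 2 + 3 by omega,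
      pow_add]
    ring

theorem stmt_15_general (k : ℕ) :
    Nat.card {v : ZMod (2 ^ k) × ZMod (2 ^ k) × ZMod (2 ^ k) //
        v.1 ^ 2 + v.2.1 ^ 2 + v.2.2 ^ 2 = 0} =
      if Even k then 2 ^ (3 * k / 2) else 2 ^ ((3 * k + 1) / 2) := by
  rw [ite_eq_right_iff.2 fun ⟨m, hm⟩ => by rw [hm]; congr 1; omega]
  exact card_sumSq_eq_zero_two_pow k

theorem stmt_15 (k : ℕ) (hk : 1 ≤ k) :
    Nat.card {v : ZMod (2 ^ k) × ZMod (2 ^ k) × ZMod (2 ^ k) //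
        v.1 ^ 2 + v.2.1 ^ 2 + v.2.2 ^ 2 = 0} =
      if Even k then 2 ^ (3 * k / 2) else 2 ^ ((3 * k + 1) / 2) :=
  stmt_15_general k
end

section
/- Let k ≥ 3 and let t ∈ Z_{2^k} with t = 2^r s where s is odd and r ≥ 2 (and r < k). Then N_2(t, 2^k) = 4 · N_2(2^{r−2} s, 2^{k−2}) and N_3(t, 2^k) = 8 · N_3(2^{r−2} s, 2^{k−2}). -/
/-!
Write `2^k = 4N` and `t = 4c` (possible as `r ≥ 2`). Squares in `ZMod 4` are `0` or `1`, so a sum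
of at most three squares is `≡ 0 (mod 4)` only if every summand is even: every solution `x` of
`∑ xᵢ² = t` in `ZMod (4N)` has the form `x = 2y`, and the doubling map has kernel `{0, 2N}^m`.
Hence the tuples `y` with `∑ (2yᵢ)² = t` number `2^m · N_m(t, 4N)`. On the other hand
`∑ (2yᵢ)² = 4 ∑ yᵢ²`, and `4 ∑ yᵢ² = 4c` in `ZMod (4N)` iff `∑ yᵢ² = c` in `ZMod N`; reduction
mod `N` has kernel of size `4^m`, so the same tuples number `4^m · N_m(c, N)`.
-/

namespace AddMonoidHom

variable {G H : Type*} [AddGroup G] [AddGroup H]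

theorem card_subtype_comp_eq_card_ker_mul [Finite G] (f : G →+ H) (P : H → Prop) :
    Nat.card {g // P (f g)} = Nat.card f.ker * Nat.card {h // h ∈ f.range ∧ P h} := by
  have : Finite {h // h ∈ f.range ∧ P h} :=
    ((Set.finite_range f).subset fun h hh => f.mem_range.mp hh.1).to_subtype
  have := Fintype.ofFinite {h // h ∈ f.range ∧ P h}
  rw [← Nat.card_congr (Equiv.sigmaSubtypeFiberEquivSubtype f (q := fun h => h ∈ f.range ∧ P h)
    fun g => (and_iff_right ⟨g, rfl⟩).symm), Nat.card_sigma]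
  have hfiber : ∀ h : {h // h ∈ f.range ∧ P h}, Nat.card {g // f g = h} = Nat.card f.ker := by
    rintro ⟨_, ⟨a, rfl⟩, -⟩
    exact Nat.card_congr (f.fiberEquivKer a)
  rw [Finset.sum_congr rfl fun h _ => hfiber h, Finset.sum_const, smul_eq_mul, mul_comm,
    Finset.card_univ, ← Nat.card_eq_fintype_card]

theorem mem_range_compLeft (f : G →+ H) (ι : Type*) {x : ι → H} :
    x ∈ (f.compLeft ι).range ↔ ∀ i, x i ∈ f.range := by
  refine ⟨fun ⟨y, hy⟩ i => ⟨y i, congr_fun hy i⟩, fun hx => ?_⟩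
  choose y hy using hx
  exact ⟨y, funext hy⟩

theorem card_ker_compLeft (f : G →+ H) (ι : Type*) [Finite ι] :
    Nat.card (f.compLeft ι).ker = Nat.card f.ker ^ Nat.card ι := by
  rw [← Nat.card_fun]
  exact Nat.card_congr <| (Equiv.subtypeEquivRight fun x => by
    simp [mem_ker, funext_iff]).trans (Equiv.subtypePiEquivPi)

end AddMonoidHom

namespace ZMod

theorem card_ker_castHom (a N : ℕ) [NeZero N] :
    Nat.card (castHom (dvd_mul_left N a) (ZMod N)).toAddMonoidHom.ker = a := by
  have hsurj := ringHom_surjective (castHom (dvd_mul_left N a) (ZMod N))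
  have h := (castHom (dvd_mul_left N a) (ZMod N)).toAddMonoidHom.ker.card_mul_index
  rw [AddSubgroup.index_ker, AddMonoidHom.range_eq_top.mpr hsurj, AddSubgroup.card_top,
    Nat.card_zmod, Nat.card_zmod] at h
  exact Nat.eq_of_mul_eq_mul_right (Nat.pos_of_neZero N) h

theorem mul_eq_mul_iff_castHom_eq {a N : ℕ} [NeZero a] [NeZero N] (u v : ZMod (a * N)) :
    (a : ZMod (a * N)) * u = a * v ↔
      castHom (dvd_mul_left N a) (ZMod N) u = castHom (dvd_mul_left N a) (ZMod N) v := by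
  rw [← natCast_zmod_val u, ← natCast_zmod_val v]
  simp only [castHom_apply, cast_natCast (dvd_mul_left N a), ← Nat.cast_mul,
    natCast_eq_natCast_iff]
  exact Nat.ModEq.mul_left_cancel_iff' (NeZero.ne a)

end ZMod

theorem sq_eq_zero_or_one_zmod_four (a : ZMod 4) : a ^ 2 = 0 ∨ a ^ 2 = 1 := by
  revert a; decide

open Finset in
theorem sq_eq_zero_of_sum_sq_eq_zero_zmod_four {m : ℕ} (hm : m < 4) (a : Fin m → ZMod 4)
    (h : ∑ i, a i ^ 2 = 0) (i : Fin m) : a i ^ 2 = 0 := by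
  classical
  have hcount : ∑ j, a j ^ 2 = (#{j | a j ^ 2 = 1} : ZMod 4) := by
    rw [natCast_card_filter]
    refine sum_congr rfl fun j _ => ?_
    rcases sq_eq_zero_or_one_zmod_four (a j) with hj | hj <;> simp [hj]
  have hlt : #{j | a j ^ 2 = 1} < 4 := (card_filter_le _ _).trans_lt (by simpa using hm)
  rw [h, eq_comm, ZMod.natCast_eq_zero_iff] at hcount
  have hempty := card_eq_zero.mp (Nat.eq_zero_of_dvd_of_lt hcount hlt)
  exact (sq_eq_zero_or_one_zmod_four (a i)).resolve_right
    (filter_eq_empty_iff.mp hempty (mem_univ i))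

theorem exists_two_nsmul_eq_of_sq_castHom_eq_zero {N : ℕ} [NeZero N] (x : ZMod (4 * N))
    (h : ZMod.castHom (dvd_mul_right 4 N) (ZMod 4) x ^ 2 = 0) : ∃ y, 2 • y = x := by
  rw [← ZMod.natCast_zmod_val x, map_natCast, ← Nat.cast_pow, ZMod.natCast_eq_zero_iff] at h
  obtain ⟨w, hw⟩ := Nat.prime_two.dvd_of_dvd_pow (dvd_trans ⟨2, rfl⟩ h)
  exact ⟨w, by rw [← ZMod.natCast_zmod_val x, hw, nsmul_eq_mul, Nat.cast_mul, Nat.cast_ofNat]⟩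

open AddMonoidHom Finset in
theorem sumSqCount_eq_two_pow_mul {m N M : ℕ} [NeZero N] (hm : m < 4) (hM : M = 4 * N) (c : ℕ) :
    sumSqCount m M (4 * c : ℕ) = 2 ^ m * sumSqCount m N c := by
  subst hM
  set χ := ZMod.castHom (dvd_mul_right 4 N) (ZMod 4)
  set π := ZMod.castHom (dvd_mul_left N 4) (ZMod N)
  set D := (nsmulAddMonoidHom 2 : ZMod (4 * N) →+ ZMod (4 * N)).compLeft (Fin m)
  set ρ := π.toAddMonoidHom.compLeft (Fin m)
  set T : ZMod (4 * N) := ((4 * c : ℕ) : ZMod (4 * N))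
  have hT : χ T = 0 := by
    rw [map_natCast, ZMod.natCast_eq_zero_iff]; exact dvd_mul_right 4 c
  have heven : ∀ x : Fin m → ZMod (4 * N), ∑ i, x i ^ 2 = T → x ∈ D.range := by
    intro x hx
    refine (mem_range_compLeft _ _).mpr fun i => ?_
    refine exists_two_nsmul_eq_of_sq_castHom_eq_zero (x i) ?_
    refine sq_eq_zero_of_sum_sq_eq_zero_zmod_four hm (fun j => χ (x j)) ?_ i
    simp only [← map_pow, ← map_sum, hx, hT]
  have hdouble : Nat.card {y // ∑ i, D y i ^ 2 = T} = 2 ^ m * sumSqCount m (4 * N) T := by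
    rw [D.card_subtype_comp_eq_card_ker_mul (fun x => ∑ i, x i ^ 2 = T), card_ker_compLeft,
      IsAddCyclic.card_nsmulAddMonoidHom_ker, Nat.card_zmod, Nat.card_fin,
      Nat.gcd_eq_right (dvd_mul_of_dvd_left (by norm_num) N)]
    exact congrArg _ (Nat.card_congr (Equiv.subtypeEquivRight fun x =>
      and_iff_right_of_imp (heven x)))
  have hsq : ∀ y, ∑ i, D y i ^ 2 = T ↔ ∑ i, ρ y i ^ 2 = (c : ZMod N) := by
    intro y
    have h4 : ∑ i, D y i ^ 2 = ((4 : ℕ) : ZMod (4 * N)) * ∑ i, y i ^ 2 := by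
      simp only [D, compLeft_apply, Function.comp_apply, nsmulAddMonoidHom_apply, mul_sum]
      refine sum_congr rfl fun i _ => ?_
      push_cast; ring
    rw [h4, show T = ((4 : ℕ) : ZMod (4 * N)) * c from Nat.cast_mul 4 c,
      ZMod.mul_eq_mul_iff_castHom_eq, map_natCast, map_sum]
    simp [ρ, π]
  have hreduce : Nat.card {y // ∑ i, D y i ^ 2 = T} = 4 ^ m * sumSqCount m N c := by
    rw [Nat.card_congr (Equiv.subtypeEquivRight hsq),
      ρ.card_subtype_comp_eq_card_ker_mul (fun z => ∑ i, z i ^ 2 = (c : ZMod N)),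
      card_ker_compLeft, ZMod.card_ker_castHom, Nat.card_fin]
    exact congrArg _ (Nat.card_congr (Equiv.subtypeEquivRight fun z => and_iff_right
      ((mem_range_compLeft _ _).mpr fun i => ZMod.ringHom_surjective π (z i))))
  refine Nat.eq_of_mul_eq_mul_left (pow_pos two_pos m) ?_
  rw [← mul_assoc, ← mul_pow, ← hdouble, hreduce]
  norm_num

theorem stmt_16_general (k : ℕ) (t : ZMod (2 ^ k)) (r s : ℕ)
    (ht : t.val = 2 ^ r * s) (hr : 2 ≤ r) (hrk : r < k) :
    sumSqCount 2 (2 ^ k) t =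
      4 * sumSqCount 2 (2 ^ (k - 2)) ((2 ^ (r - 2) * s : ℕ) : ZMod (2 ^ (k - 2))) ∧
    sumSqCount 3 (2 ^ k) t =
      8 * sumSqCount 3 (2 ^ (k - 2)) ((2 ^ (r - 2) * s : ℕ) : ZMod (2 ^ (k - 2))) := by
  have hM : 2 ^ k = 4 * 2 ^ (k - 2) := by
    conv_lhs => rw [← Nat.sub_add_cancel (hr.trans hrk.le), pow_add]
    ring
  have ht4 : t = ((4 * (2 ^ (r - 2) * s) : ℕ) : ZMod (2 ^ k)) := by
    conv_lhs => rw [← ZMod.natCast_zmod_val t, ht, ← Nat.sub_add_cancel hr, pow_add]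
    ring_nf
  rw [ht4]
  exact ⟨sumSqCount_eq_two_pow_mul (by norm_num) hM _,
    sumSqCount_eq_two_pow_mul (by norm_num) hM _⟩

theorem stmt_16 (k : ℕ) (hk : 3 ≤ k) (t : ZMod (2 ^ k)) (r s : ℕ)
    (ht : t.val = 2 ^ r * s) (hs : Odd s) (hr : 2 ≤ r) (hrk : r < k) :
    sumSqCount 2 (2 ^ k) t =
      4 * sumSqCount 2 (2 ^ (k - 2)) ((2 ^ (r - 2) * s : ℕ) : ZMod (2 ^ (k - 2))) ∧
    sumSqCount 3 (2 ^ k) t =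
      8 * sumSqCount 3 (2 ^ (k - 2)) ((2 ^ (r - 2) * s : ℕ) : ZMod (2 ^ (k - 2))) :=
  stmt_16_general k t r s ht hr hrk
end
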